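/- arXiv:1910.02302 — 9 statements merged into one kernel-verified Lean document; each statement's English description precedes it below -/
import Mathlib

section
/- Let s = diag(r, rq) ∈ GL(2,ℚ) with r > 0 and q ≥ 2 an integer, and let BS ≤ GL(2,ℚ) be the subgroup generated by s and u = [[1,1],[0,1]]. Then BS ∩ SL(2,ℤ) is the infinite cyclic group generated by u. -/
/-- `SL(2,ℤ)` viewed as a subgroup of `GL(2,ℚ)`. -/
noncomputable def SL2Z : Subgroup (GL (Fin 2) ℚ) :=
  (Matrix.SpecialLinearGroup.toGL.comp
    (Matrix.SpecialLinearGroup.map (Int.castRingHom ℚ))).range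

/-!
Both generators lie in the group of upper triangular matrices with positive `(0,0)` entry. An
integral matrix of determinant one in that group has diagonal `(1, 1)`, so it is
`!![1, n; 0, 1] = u ^ n` for an integer `n`.
-/

open Matrix

namespace Matrix.GeneralLinearGroup

variable {R : Type*}

section Ordered

variable [CommRing R] [LinearOrder R] [IsStrictOrderedRing R]

def upperTriangularPos : Subgroup (GL (Fin 2) R) where
  carrier := {g | (g : Matrix (Fin 2) (Fin 2) R) 1 0 = 0 ∧ 0 < (g : Matrix (Fin 2) (Fin 2) R) 0 0}
  one_mem' := by simp
  mul_mem' := by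
    rintro g h ⟨hg₁₀, hg₀₀⟩ ⟨hh₁₀, hh₀₀⟩
    simp only [Set.mem_ofPred_eq, Units.val_mul, mul_apply, Fin.sum_univ_two, hg₁₀, hh₁₀]
    exact ⟨by ring, by simpa using mul_pos hg₀₀ hh₀₀⟩
  inv_mem' := by
    rintro g ⟨hg₁₀, hg₀₀⟩
    have h := congrArg (fun M : GL (Fin 2) R ↦ (M : Matrix (Fin 2) (Fin 2) R)) (inv_mul_cancel g)
    have h₁₀ := congrFun₂ h 1 0
    have h₀₀ := congrFun₂ h 0 0
    simp only [Units.val_mul, Units.val_one, mul_apply, Fin.sum_univ_two, hg₁₀, mul_zero,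
      add_zero, one_apply_ne (by decide : (1 : Fin 2) ≠ 0), one_apply_eq] at h₁₀ h₀₀
    refine ⟨(mul_eq_zero.mp h₁₀).resolve_right hg₀₀.ne', ?_⟩
    exact pos_of_mul_pos_left (h₀₀ ▸ one_pos) hg₀₀.le

end Ordered

theorem val_zpow_of_val_eq_unitriangular [CommRing R] {u : GL (Fin 2) R}
    (hu : (u : Matrix (Fin 2) (Fin 2) R) = !![1, 1; 0, 1]) (m : ℤ) :
    ((u ^ m : GL (Fin 2) R) : Matrix (Fin 2) (Fin 2) R) = !![1, (m : R); 0, 1] := by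
  have hinv : ((u⁻¹ : GL (Fin 2) R) : Matrix (Fin 2) (Fin 2) R) = !![1, -1; 0, 1] := by
    rw [coe_units_inv, hu, inv_eq_left_inv]
    simp [one_fin_two]
  induction m using Int.induction_on with
  | zero => simp [one_fin_two]
  | succ k ih =>
    rw [_root_.zpow_add_one, Units.val_mul, ih, hu]
    simp [add_comm]
  | pred k ih =>
    rw [_root_.zpow_sub_one, Units.val_mul, ih, hinv]
    simp [sub_eq_add_neg, add_comm]

end Matrix.GeneralLinearGroup

open Matrix.GeneralLinearGroup

theorem mem_SL2Z_iff {g : GL (Fin 2) ℚ} :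
    g ∈ SL2Z ↔ ∃ A : Matrix (Fin 2) (Fin 2) ℤ, A.det = 1 ∧
      (g : Matrix (Fin 2) (Fin 2) ℚ) = A.map Int.cast := by
  constructor
  · rintro ⟨A, rfl⟩
    exact ⟨A, A.prop, rfl⟩
  · rintro ⟨A, hA, hg⟩
    exact ⟨⟨A, hA⟩, Units.ext hg.symm⟩

theorem val_eq_unitriangular_of_mem_SL2Z_of_mem_upperTriangularPos {g : GL (Fin 2) ℚ}
    (hSL : g ∈ SL2Z) (hg : g ∈ upperTriangularPos) :
    ∃ n : ℤ, (g : Matrix (Fin 2) (Fin 2) ℚ) = !![1, (n : ℚ); 0, 1] := by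
  obtain ⟨A, hdet, hA⟩ := mem_SL2Z_iff.mp hSL
  obtain ⟨h₁₀, h₀₀⟩ := hg
  simp only [hA, map_apply, Int.cast_eq_zero, Int.cast_pos] at h₁₀ h₀₀
  rw [det_fin_two, h₁₀, mul_zero, sub_zero] at hdet
  obtain ⟨h₀₀', h₁₁'⟩ : A 0 0 = 1 ∧ A 1 1 = 1 := by
    rcases Int.mul_eq_one_iff_eq_one_or_neg_one.mp hdet with h | h
    · exact h
    · omega
  refine ⟨A 0 1, ?_⟩
  rw [hA, eta_fin_two (A.map _)]
  simp [h₀₀', h₁₁', h₁₀]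

theorem stmt1_general (r : ℚ) (hr : 0 < r) (q : ℕ)
    (u s : GL (Fin 2) ℚ)
    (hu : (u : Matrix (Fin 2) (Fin 2) ℚ) = !![1, 1; 0, 1])
    (hs : (s : Matrix (Fin 2) (Fin 2) ℚ) = !![r, 0; 0, r * q]) :
    Subgroup.closure {s, u} ⊓ SL2Z = Subgroup.zpowers u ∧ ¬ IsOfFinOrder u := by
  have hu_pos : u ∈ upperTriangularPos := by simp [upperTriangularPos, hu]
  have hs_pos : s ∈ upperTriangularPos := by simp [upperTriangularPos, hs, hr]
  have hu_SL : u ∈ SL2Z :=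
    mem_SL2Z_iff.mpr ⟨!![1, 1; 0, 1], by simp [det_fin_two_of], by simp [hu, ← Matrix.ext_iff]⟩
  have h_closure : Subgroup.closure {s, u} ≤ upperTriangularPos := by
    rw [Subgroup.closure_le]
    rintro x (rfl | rfl) <;> assumption
  refine ⟨le_antisymm ?_ ?_, ?_⟩
  · rintro g ⟨hg_closure, hg_SL⟩
    obtain ⟨n, hn⟩ :=
      val_eq_unitriangular_of_mem_SL2Z_of_mem_upperTriangularPos hg_SL (h_closure hg_closure)
    exact ⟨n, Units.ext (by rw [val_zpow_of_val_eq_unitriangular hu, hn])⟩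
  · rw [Subgroup.zpowers_le]
    exact ⟨Subgroup.subset_closure (by simp), hu_SL⟩
  · rw [← injective_zpow_iff_not_isOfFinOrder]
    intro m n hmn
    have h := congrArg (fun g : GL (Fin 2) ℚ ↦ (g : Matrix (Fin 2) (Fin 2) ℚ) 0 1) hmn
    simpa [val_zpow_of_val_eq_unitriangular hu] using h

/-- For `s = diag(r, r*q)` with `r > 0`, `q ≥ 2` and `u = [[1,1],[0,1]]`, the
intersection of the subgroup `BS = ⟨s, u⟩ ≤ GL(2,ℚ)` with `SL(2,ℤ)` is the
infinite cyclic group generated by `u`. -/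
theorem stmt1 (r : ℚ) (hr : 0 < r) (q : ℕ) (hq : 2 ≤ q)
    (u s : GL (Fin 2) ℚ)
    (hu : (u : Matrix (Fin 2) (Fin 2) ℚ) = !![1, 1; 0, 1])
    (hs : (s : Matrix (Fin 2) (Fin 2) ℚ) = !![r, 0; 0, r * q]) :
    Subgroup.closure {s, u} ⊓ SL2Z = Subgroup.zpowers u ∧ ¬ IsOfFinOrder u :=
  stmt1_general r hr q u s hu hs
end

section
/- For q ≥ 2, the Baumslag–Solitar group BS(1,q) does not embed into GL(2,ℤ) × A for any abelian group A. -/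
/-!
An element `c` of `GL(2,ℤ)` conjugate to `c ^ q`, `q ≥ 2`, has finite order. Replacing `c` by
`c²` we may assume `det c = 1`, and conjugation preserves the trace `τ` of `c`. If `|τ| > 2`, the
recurrence `tr cⁿ⁺² = τ tr cⁿ⁺¹ - tr cⁿ` makes `|tr cⁿ|` strictly increasing, contradicting
`tr c^q = tr c`. If `|τ| ≤ 1`, Cayley–Hamilton gives `c³ = ±1` or `c² = -1`. If `|τ| = 2`, then
`c² = 1 + N` with `N² = 0` and `g N g⁻¹ = q N`, so every power of `q` divides the entries of `N`,
and `N = 0`.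

In an abelian group the relation `t b t⁻¹ = b ^ q` reads `b ^ (q - 1) = 1`. So an embedding of
`BS(1,q)` into `GL(2,ℤ) × A` would send `b` to an element of finite order, while `b` has infinite
order: it acts on `ℚ` as `x ↦ x + 1`, with `t` acting as `x ↦ q x`.
-/

/-- The Baumslag–Solitar group `BS(1,q)`, presented by generators `b = of false`,
`t = of true` and the single relation `t * b * t⁻¹ = b ^ q`. -/
def BS (q : ℕ) : Type :=
  PresentedGroup ({FreeGroup.of true * FreeGroup.of false * (FreeGroup.of true)⁻¹ *
    (FreeGroup.of false ^ q)⁻¹} : Set (FreeGroup Bool))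

instance (q : ℕ) : Group (BS q) := by unfold BS; infer_instance

theorem one_add_pow_of_mul_self_eq_zero {R : Type*} [Ring R] {N : R} (hN : N * N = 0) (n : ℕ) :
    (1 + N) ^ n = 1 + n • N := by
  induction n with
  | zero => simp
  | succ n ih =>
    rw [pow_succ, ih, add_mul, one_mul, mul_add, mul_one, smul_mul_assoc, hN, smul_zero,
      succ_nsmul]
    abel

theorem Units.conj_pow_eq_pow_smul {R A : Type*} [CommSemiring R] [Semiring A] [Algebra R A]
    {q : R} {g : Aˣ} {a : A} (h : (g : A) * a * ↑g⁻¹ = q • a) (k : ℕ) :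
    (↑(g ^ k) : A) * a * ↑(g ^ k)⁻¹ = q ^ k • a := by
  induction k with
  | zero => simp
  | succ k ih =>
    calc (↑(g ^ (k + 1)) : A) * a * ↑(g ^ (k + 1))⁻¹
        = g * (↑(g ^ k) * a * ↑(g ^ k)⁻¹) * ↑g⁻¹ := by
          simp only [pow_succ', mul_inv_rev, Units.val_mul, mul_assoc]
      _ = q ^ (k + 1) • a := by
          rw [ih, mul_smul_comm, smul_mul_assoc, h, smul_smul, pow_succ]

theorem isOfFinOrder_of_pow_eq_self {G : Type*} [Group G] {x : G} {q : ℕ} (hq : 2 ≤ q)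
    (h : x ^ q = x) : IsOfFinOrder x := by
  refine isOfFinOrder_iff_pow_eq_one.2 ⟨q - 1, by omega, mul_right_cancel (b := x) ?_⟩
  rw [← pow_succ, Nat.sub_add_cancel (by omega), h, one_mul]

namespace Matrix

theorem eq_zero_of_units_conj_eq_smul {n : Type*} [Fintype n] [DecidableEq n] {q : ℤ}
    (hq : q.natAbs ≠ 1) {g : (Matrix n n ℤ)ˣ} {N : Matrix n n ℤ}
    (h : (g : Matrix n n ℤ) * N * (↑g⁻¹ : Matrix n n ℤ) = q • N) : N = 0 := by
  have hdvd (k : ℕ) (i j : n) : q ^ k ∣ N i j := by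
    have hN : N = q ^ k • ((↑(g ^ k)⁻¹ : Matrix n n ℤ) * N * (↑(g ^ k) : Matrix n n ℤ)) := by
      rw [mul_assoc, ← mul_smul_comm, ← smul_mul_assoc, ← g.conj_pow_eq_pow_smul h k]
      simp [mul_assoc]
    rw [hN]
    exact ⟨_, rfl⟩
  ext i j
  by_contra hij
  exact FiniteMultiplicity.not_iff_forall.2 (hdvd · i j) (Int.finiteMultiplicity_iff.2 ⟨hq, hij⟩)

variable {R : Type*} [CommRing R]

theorem sq_fin_two (M : Matrix (Fin 2) (Fin 2) R) : M ^ 2 = M.trace • M - M.det • 1 := by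
  ext i j
  fin_cases i <;> fin_cases j <;>
    simp [sq, mul_apply, trace_fin_two, det_fin_two] <;> ring

theorem trace_pow_add_two_fin_two (M : Matrix (Fin 2) (Fin 2) R) (n : ℕ) :
    (M ^ (n + 2)).trace = M.trace * (M ^ (n + 1)).trace - M.det * (M ^ n).trace := by
  rw [pow_add, sq_fin_two, mul_sub, mul_smul_comm, mul_smul_comm, mul_one, ← pow_succ,
    trace_sub, trace_smul, trace_smul, smul_eq_mul, smul_eq_mul]

theorem strictMono_abs_trace_pow_fin_two [LinearOrder R] [IsStrictOrderedRing R]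
    {M : Matrix (Fin 2) (Fin 2) R} (hdet : M.det = 1) (htr : 2 < |M.trace|) :
    StrictMono fun n : ℕ ↦ |(M ^ n).trace| := by
  refine strictMono_nat_of_lt_succ fun n ↦ ?_
  induction n with
  | zero => simpa using htr
  | succ n ih =>
    have hrec := trace_pow_add_two_fin_two M n
    rw [hdet, one_mul] at hrec
    have hlower := abs_sub_abs_le_abs_sub (M.trace * (M ^ (n + 1)).trace) (M ^ n).trace
    rw [abs_mul, ← hrec] at hlower
    have hmul := mul_le_mul_of_nonneg_right htr.le (abs_nonneg (M ^ (n + 1)).trace)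
    show |(M ^ (n + 1)).trace| < |(M ^ (n + 2)).trace|
    linarith [abs_nonneg (M ^ n).trace]

theorem isOfFinOrder_of_det_eq_one_of_abs_trace_le_one {M : Matrix (Fin 2) (Fin 2) ℤ}
    (hdet : M.det = 1) (htr : |M.trace| ≤ 1) : IsOfFinOrder M := by
  have hsq := sq_fin_two M
  rw [hdet, one_smul] at hsq
  obtain ⟨hlo, hhi⟩ := abs_le.1 htr
  rw [isOfFinOrder_iff_pow_eq_one]
  interval_cases M.trace
  · refine ⟨3, three_pos, ?_⟩
    rw [neg_one_smul] at hsq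
    calc M ^ 3 = M ^ 2 * M := pow_succ M 2
      _ = -(M * M) - M := by rw [hsq]; noncomm_ring
      _ = 1 := by rw [← sq, hsq]; abel
  · refine ⟨4, four_pos, ?_⟩
    rw [zero_smul, zero_sub] at hsq
    rw [show 4 = 2 * 2 from rfl, pow_mul, hsq, neg_one_sq]
  · refine ⟨6, by norm_num, ?_⟩
    rw [one_smul] at hsq
    have hcube : M ^ 3 = -1 :=
      calc M ^ 3 = M ^ 2 * M := pow_succ M 2
        _ = M * M - M := by rw [hsq]; noncomm_ring
        _ = -1 := by rw [← sq, hsq]; abel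
    rw [show 6 = 3 * 2 from rfl, pow_mul, hcube, neg_one_sq]

end Matrix

namespace Matrix.GeneralLinearGroup

variable {q : ℕ} {g : GL (Fin 2) ℤ}

theorem val_conj_eq_pow {c : GL (Fin 2) ℤ} (h : g * c * g⁻¹ = c ^ q) :
    (g : Matrix (Fin 2) (Fin 2) ℤ) * c * (↑g⁻¹ : Matrix (Fin 2) (Fin 2) ℤ) =
      (c : Matrix (Fin 2) (Fin 2) ℤ) ^ q := by
  simpa only [Units.val_mul, Units.val_pow_eq_pow_val] using congrArg Units.val h

theorem eq_one_of_conj_eq_pow_of_trace_eq_two (hq : 2 ≤ q) {u : GL (Fin 2) ℤ}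
    (h : g * u * g⁻¹ = u ^ q) (htr : (u : Matrix (Fin 2) (Fin 2) ℤ).trace = 2)
    (hdet : (u : Matrix (Fin 2) (Fin 2) ℤ).det = 1) : u = 1 := by
  set N : Matrix (Fin 2) (Fin 2) ℤ := u - 1 with hN
  have hsq := sq_fin_two (u : Matrix (Fin 2) (Fin 2) ℤ)
  rw [htr, hdet, one_smul, two_smul] at hsq
  have hNN : N * N = 0 :=
    calc N * N = (u : Matrix (Fin 2) (Fin 2) ℤ) ^ 2 - (u + u - 1) := by rw [hN]; noncomm_ring
      _ = 0 := by rw [hsq, sub_self]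
  have hconj : (g : Matrix (Fin 2) (Fin 2) ℤ) * N * (↑g⁻¹ : Matrix (Fin 2) (Fin 2) ℤ) =
      (q : ℤ) • N :=
    calc (g : Matrix (Fin 2) (Fin 2) ℤ) * N * (↑g⁻¹ : Matrix (Fin 2) (Fin 2) ℤ)
        = (u : Matrix (Fin 2) (Fin 2) ℤ) ^ q - 1 := by
          rw [hN, mul_sub, sub_mul, mul_one, Units.mul_inv, val_conj_eq_pow h]
      _ = (1 + N) ^ q - 1 := by rw [hN, add_sub_cancel]
      _ = (q : ℤ) • N := by
          rw [one_add_pow_of_mul_self_eq_zero hNN, add_sub_cancel_left, Nat.cast_smul_eq_nsmul]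
  have hN0 : N = 0 := eq_zero_of_units_conj_eq_smul (by omega) hconj
  exact Units.ext (sub_eq_zero.1 hN0)

theorem isOfFinOrder_of_conj_eq_pow_of_det_eq_one (hq : 2 ≤ q) {c : GL (Fin 2) ℤ}
    (h : g * c * g⁻¹ = c ^ q) (hdet : (c : Matrix (Fin 2) (Fin 2) ℤ).det = 1) :
    IsOfFinOrder c := by
  set M : Matrix (Fin 2) (Fin 2) ℤ := ↑c
  have htr : (M ^ q).trace = M.trace := by rw [← val_conj_eq_pow h, trace_units_conj]
  rcases lt_or_ge 2 |M.trace| with hhyp | hle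
  · have hq1 : q = 1 := (strictMono_abs_trace_pow_fin_two hdet hhyp).injective
      (by simp only [htr, pow_one])
    omega
  rcases hle.lt_or_eq with hell | hpar
  · exact Units.isOfFinOrder_val.1 <|
      isOfFinOrder_of_det_eq_one_of_abs_trace_le_one hdet (Int.lt_add_one_iff.1 hell)
  · have hsq : g * c ^ 2 * g⁻¹ = (c ^ 2) ^ q := by rw [← conj_pow, h, pow_right_comm]
    have htr2 : ((c ^ 2 : GL (Fin 2) ℤ) : Matrix (Fin 2) (Fin 2) ℤ).trace = 2 := by
      have := trace_pow_add_two_fin_two M 0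
      simp only [zero_add, pow_one, pow_zero, hdet, one_mul, trace_one, Fintype.card_fin] at this
      rw [Units.val_pow_eq_pow_val, this, ← abs_mul_abs_self, hpar]
      norm_num
    have hdet2 : ((c ^ 2 : GL (Fin 2) ℤ) : Matrix (Fin 2) (Fin 2) ℤ).det = 1 := by
      rw [Units.val_pow_eq_pow_val, det_pow, hdet, one_pow]
    exact isOfFinOrder_iff_pow_eq_one.2
      ⟨2, two_pos, eq_one_of_conj_eq_pow_of_trace_eq_two hq hsq htr2 hdet2⟩

theorem isOfFinOrder_of_conj_eq_pow (hq : 2 ≤ q) {c : GL (Fin 2) ℤ}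
    (h : g * c * g⁻¹ = c ^ q) : IsOfFinOrder c := by
  have hsq : g * c ^ 2 * g⁻¹ = (c ^ 2) ^ q := by rw [← conj_pow, h, pow_right_comm]
  have hdet : ((c ^ 2 : GL (Fin 2) ℤ) : Matrix (Fin 2) (Fin 2) ℤ).det = 1 := by
    rw [← val_det_apply, map_pow, Int.units_sq, Units.val_one]
  exact (isOfFinOrder_of_conj_eq_pow_of_det_eq_one hq hsq hdet).of_pow two_ne_zero

end Matrix.GeneralLinearGroup

namespace BS

variable {q : ℕ}

def b : BS q := PresentedGroup.of false

def t : BS q := PresentedGroup.of true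

theorem t_mul_b_mul_t_inv : (t : BS q) * b * t⁻¹ = b ^ q :=
  mul_inv_eq_one.1 (PresentedGroup.one_of_mem rfl)

def lift {G : Type*} [Group G] (x y : G) (h : y * x * y⁻¹ = x ^ q) : BS q →* G :=
  PresentedGroup.toGroup (f := fun i ↦ cond i y x) <| by
    rintro r rfl
    simpa using mul_inv_eq_one.2 h

theorem lift_b {G : Type*} [Group G] (x y : G) (h : y * x * y⁻¹ = x ^ q) : lift x y h b = x :=
  PresentedGroup.toGroup.of _

theorem not_isOfFinOrder_b (hq : q ≠ 0) : ¬IsOfFinOrder (b : BS q) := by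
  intro hb
  have hq' : (q : ℚ) ≠ 0 := by exact_mod_cast hq
  have hrel : Equiv.mulLeft₀ (q : ℚ) hq' * Equiv.addRight 1 * (Equiv.mulLeft₀ (q : ℚ) hq')⁻¹ =
      Equiv.addRight 1 ^ q := by
    ext x
    simp [mul_add, hq']
  have hfin := (lift _ _ hrel).isOfFinOrder hb
  rw [lift_b] at hfin
  refine not_isOfFinOrder_of_injective_pow (fun m n hmn ↦ ?_) hfin
  simpa using congrArg (· 0) hmn

end BS

/-- For `q ≥ 2`, the Baumslag–Solitar group `BS(1,q)` does not embed into
`GL(2,ℤ) × A` for any abelian group `A`. -/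
theorem stmt2 (q : ℕ) (hq : 2 ≤ q) (A : Type*) [CommGroup A] :
    ¬ ∃ f : BS q →* GL (Fin 2) ℤ × A, Function.Injective f := by
  rintro ⟨f, hf⟩
  have hrel : f BS.t * f BS.b * (f BS.t)⁻¹ = f BS.b ^ q := by
    simpa only [map_mul, map_inv, map_pow] using congrArg f BS.t_mul_b_mul_t_inv
  have hfst : IsOfFinOrder (f BS.b).1 :=
    Matrix.GeneralLinearGroup.isOfFinOrder_of_conj_eq_pow hq (by simpa using congrArg Prod.fst hrel)
  have hsnd : IsOfFinOrder (f BS.b).2 :=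
    isOfFinOrder_of_pow_eq_self hq (by simpa using (congrArg Prod.snd hrel).symm)
  exact BS.not_isOfFinOrder_b (by omega) <|
    hf.isOfFinOrder_iff.1 (IsOfFinOrder.prod_iff.2 ⟨hfst, hsnd⟩)
end

section
/- If b = (a,0), t = (s,y) generate a subgroup of GL(2,ℤ) × A satisfying t b t⁻¹ = b^q with q ≥ 2 and a of infinite order, then the projection to GL(2,ℤ) is injective on ⟨b,t⟩. -/
private lemma conj_pow_aux {G : Type*} [Group G] {u v : G} {q : ℕ}
    (h : u * v * u⁻¹ = v ^ q) (m : ℕ) (z : ℤ) :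
    u ^ m * v ^ z * (u ^ m)⁻¹ = v ^ ((q : ℤ) ^ m * z) := by
  induction m generalizing z with
  | zero => simp
  | succ n ih =>
    have h1 : u * v ^ z * u⁻¹ = v ^ ((q : ℤ) * z) := by
      rw [← conj_zpow, h, ← zpow_natCast, ← zpow_mul]
    calc u ^ (n + 1) * v ^ z * (u ^ (n + 1))⁻¹
        = u ^ n * (u * v ^ z * u⁻¹) * (u ^ n)⁻¹ := by
          rw [pow_succ]; group
      _ = u ^ n * v ^ ((q : ℤ) * z) * (u ^ n)⁻¹ := by rw [h1]
      _ = v ^ ((q : ℤ) ^ (n + 1) * z) := by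
          rw [ih ((q : ℤ) * z)]; congr 1; ring

private lemma normal_form {G : Type*} [Group G] {b t : G} {q : ℕ}
    (h : t * b * t⁻¹ = b ^ q) {g : G} (hg : g ∈ Subgroup.closure {b, t}) :
    ∃ (k n : ℕ) (z : ℤ), g = (t ^ k)⁻¹ * b ^ z * t ^ n := by
  induction hg using Subgroup.closure_induction with
  | mem x hx =>
    rw [Set.mem_insert_iff, Set.mem_singleton_iff] at hx
    rcases hx with hx | hx
    · exact ⟨0, 0, 1, by simp [hx]⟩
    · exact ⟨0, 1, 0, by simp [hx]⟩
  | one => exact ⟨0, 0, 0, by simp⟩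
  | mul x y hx hy ihx ihy =>
    obtain ⟨k1, n1, z1, rfl⟩ := ihx
    obtain ⟨k2, n2, z2, rfl⟩ := ihy
    rcases le_or_gt k2 n1 with hle | hlt
    · refine ⟨k1, (n1 - k2) + n2, z1 + (q : ℤ) ^ (n1 - k2) * z2, ?_⟩
      have h2 : t ^ (n1 - k2) * b ^ z2 * (t ^ (n1 - k2))⁻¹ =
          b ^ ((q : ℤ) ^ (n1 - k2) * z2) := conj_pow_aux h _ _
      have h3 : t ^ n1 * (t ^ k2)⁻¹ = t ^ (n1 - k2) := (pow_sub t hle).symm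
      calc (t ^ k1)⁻¹ * b ^ z1 * t ^ n1 * ((t ^ k2)⁻¹ * b ^ z2 * t ^ n2)
          = (t ^ k1)⁻¹ * b ^ z1 * (t ^ n1 * (t ^ k2)⁻¹) * b ^ z2 * t ^ n2 := by group
        _ = (t ^ k1)⁻¹ * b ^ z1 * (t ^ (n1 - k2) * b ^ z2 * (t ^ (n1 - k2))⁻¹)
              * (t ^ (n1 - k2) * t ^ n2) := by rw [h3]; group
        _ = (t ^ k1)⁻¹ * b ^ z1 * b ^ ((q : ℤ) ^ (n1 - k2) * z2)
              * t ^ ((n1 - k2) + n2) := by rw [h2, pow_add]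
        _ = (t ^ k1)⁻¹ * b ^ (z1 + (q : ℤ) ^ (n1 - k2) * z2) * t ^ ((n1 - k2) + n2) := by
              rw [zpow_add]; group
    · refine ⟨k1 + (k2 - n1), n2, (q : ℤ) ^ (k2 - n1) * z1 + z2, ?_⟩
      have h2 : t ^ (k2 - n1) * b ^ z1 * (t ^ (k2 - n1))⁻¹ =
          b ^ ((q : ℤ) ^ (k2 - n1) * z1) := conj_pow_aux h _ _
      have h3 : t ^ k2 * (t ^ n1)⁻¹ = t ^ (k2 - n1) := (pow_sub t hlt.le).symm
      have h4 : t ^ n1 * (t ^ k2)⁻¹ = (t ^ (k2 - n1))⁻¹ := by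
        rw [← h3]; group
      calc (t ^ k1)⁻¹ * b ^ z1 * t ^ n1 * ((t ^ k2)⁻¹ * b ^ z2 * t ^ n2)
          = (t ^ k1)⁻¹ * b ^ z1 * (t ^ n1 * (t ^ k2)⁻¹) * b ^ z2 * t ^ n2 := by group
        _ = ((t ^ k1)⁻¹ * (t ^ (k2 - n1))⁻¹) * (t ^ (k2 - n1) * b ^ z1 * (t ^ (k2 - n1))⁻¹)
              * b ^ z2 * t ^ n2 := by rw [h4]; group
        _ = (t ^ (k1 + (k2 - n1)))⁻¹ * b ^ ((q : ℤ) ^ (k2 - n1) * z1)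
              * b ^ z2 * t ^ n2 := by rw [h2, pow_add]; group
        _ = (t ^ (k1 + (k2 - n1)))⁻¹ * b ^ ((q : ℤ) ^ (k2 - n1) * z1 + z2) * t ^ n2 := by
              rw [zpow_add]; group
  | inv x hx ihx =>
    obtain ⟨k, n, z, rfl⟩ := ihx
    exact ⟨n, k, -z, by group⟩

/-- Let `A` be an abelian group (written additively), and let `b = (a, 0)` and
`t = (s, y)` be elements of `GL(2,ℤ) × A` satisfying `t * b * t⁻¹ = b ^ q` with
`q ≥ 2` and `a` of infinite order. Then the projection onto `GL(2,ℤ)` is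
injective on the subgroup `⟨b, t⟩`. -/
theorem stmt4 (A : Type*) [AddCommGroup A] (q : ℕ) (hq : 2 ≤ q)
    (a s : GL (Fin 2) ℤ) (y : A) (ha : ¬ IsOfFinOrder a)
    (b t : GL (Fin 2) ℤ × Multiplicative A)
    (hb : b = (a, Multiplicative.ofAdd 0)) (ht : t = (s, Multiplicative.ofAdd y))
    (h : t * b * t⁻¹ = b ^ q) :
    Set.InjOn (MonoidHom.fst (GL (Fin 2) ℤ) (Multiplicative A))
      (Subgroup.closure {b, t} : Subgroup (GL (Fin 2) ℤ × Multiplicative A)) := by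
  have hfst : s * a * s⁻¹ = a ^ q := by
    have := congrArg Prod.fst h
    simpa [hb, ht, Prod.pow_fst] using this
  have haz : ∀ zz ww : ℤ, a ^ zz = a ^ ww → zz = ww :=
    fun zz ww hh => injective_zpow_iff_not_isOfFinOrder.mpr ha hh
  -- s has infinite order
  have hs : ¬ IsOfFinOrder s := by
    intro hs
    obtain ⟨m, hm, hsm⟩ := isOfFinOrder_iff_pow_eq_one.mp hs
    have h2 : a ^ (1 : ℤ) = a ^ ((q : ℤ) ^ m * 1) := by
      rw [← conj_pow_aux hfst m 1, hsm]; group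
    have hq1 : (1 : ℤ) = (q : ℤ) ^ m * 1 := haz _ _ h2
    have h3 : (2 : ℤ) ≤ (q : ℤ) ^ m := by
      have : 2 ≤ q ^ m := le_trans hq (Nat.le_self_pow hm.ne' q)
      exact_mod_cast this
    rw [mul_one] at hq1
    omega
  have hsz : ∀ zz ww : ℤ, s ^ zz = s ^ ww → zz = ww :=
    fun zz ww hh => injective_zpow_iff_not_isOfFinOrder.mpr hs hh
  -- reduce to trivial kernel
  have key : ∀ g ∈ Subgroup.closure {b, t},
      (MonoidHom.fst (GL (Fin 2) ℤ) (Multiplicative A)) g = 1 → g = 1 := by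
    intro g hg hg1
    obtain ⟨k, n, z, rfl⟩ := normal_form h hg
    have hfg : (s ^ k)⁻¹ * a ^ z * s ^ n = 1 := by
      have := hg1
      simpa [hb, ht] using this
    have haz_eq : a ^ z = s ^ (k : ℤ) * (s ^ (n : ℤ))⁻¹ := by
      have : a ^ z = s ^ k * (s ^ n)⁻¹ := by
        calc a ^ z = s ^ k * ((s ^ k)⁻¹ * a ^ z * s ^ n) * (s ^ n)⁻¹ := by group
          _ = s ^ k * 1 * (s ^ n)⁻¹ := by rw [hfg]
          _ = s ^ k * (s ^ n)⁻¹ := by group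
      simpa [zpow_natCast] using this
    have hcomm : s * a ^ z * s⁻¹ = a ^ z := by
      rw [haz_eq]; group
    have hconj : s * a ^ z * s⁻¹ = a ^ ((q : ℤ) * z) := by
      have := conj_pow_aux hfst 1 z
      simpa using this
    have hz0 : z = 0 := by
      have : (q : ℤ) * z = z := haz _ _ (hconj.symm.trans hcomm)
      have hq' : (2 : ℤ) ≤ (q : ℤ) := by exact_mod_cast hq
      nlinarith [sq_nonneg z]
    subst hz0
    have hkn : (k : ℤ) = n := by
      apply hsz
      have : s ^ (k : ℤ) * (s ^ (n : ℤ))⁻¹ = 1 := by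
        rw [← haz_eq]; simp
      rw [mul_inv_eq_one] at this
      exact this
    have hkn' : k = n := by exact_mod_cast hkn
    subst hkn'
    simp
  intro x hx y' hy' hxy
  have hmem : x * y'⁻¹ ∈ Subgroup.closure {b, t} :=
    mul_mem hx (inv_mem hy')
  have : x * y'⁻¹ = 1 := key _ hmem (by rw [map_mul, map_inv, hxy]; group)
  rw [mul_inv_eq_one] at this
  exact this
end

section
/- Every nonzero matrix g ∈ M(2,ℚ) admits a factorization g = r · e · s_q · f where r ∈ ℚ, r > 0, e, f ∈ SL(2,ℤ), q ∈ ℤ, and s_q = [[1,0],[0,q]]. Moreover r and q are uniquely determined by g. -/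
/-- The rational matrix image of an integer matrix in `SL(2,ℤ)`. -/
noncomputable def toQ (e : Matrix.SpecialLinearGroup (Fin 2) ℤ) :
    Matrix (Fin 2) (Fin 2) ℚ :=
  (e : Matrix (Fin 2) (Fin 2) ℤ).map (Int.cast)

/-!
Clearing denominators, `g` is a positive rational multiple of a nonzero integer matrix, and
over `ℤ` the Euclidean algorithm on the `(0, 0)` entry, run with row and column operations from
`SL(2,ℤ)`, brings any nonzero matrix to `a • diag(1, q)` with `a > 0`. For uniqueness, the gcd
of the entries of an integer matrix is invariant under `SL(2,ℤ)` on both sides, and it is `1`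
for `e * diag(1, q) * f`; hence `r` is the unique positive rational for which `r⁻¹ • g` is a
primitive integer matrix, and `det g = r ^ 2 * q` then determines `q`.
-/

open MatrixGroups

theorem Int.gcd_lt_natAbs_left {a b : ℤ} (ha : a ≠ 0) (h : ¬ a ∣ b) :
    Int.gcd a b < a.natAbs :=
  (Nat.le_of_dvd (Int.natAbs_pos.mpr ha) (Int.gcd_dvd_natAbs_left a b)).lt_of_ne
    (mt Int.gcd_eq_natAbs_left_iff_dvd.mp h)

namespace Matrix

section Content

variable {l m n : Type*} [Fintype l] [Fintype m] [Fintype n]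

def content (M : Matrix m n ℤ) : ℕ :=
  Finset.univ.gcd fun ij : m × n => (M ij.1 ij.2).natAbs

theorem dvd_content_iff {k : ℕ} {M : Matrix m n ℤ} :
    k ∣ content M ↔ ∀ i j, (k : ℤ) ∣ M i j := by
  simp [content, Finset.dvd_gcd_iff, Int.natCast_dvd]

theorem content_dvd (M : Matrix m n ℤ) (i : m) (j : n) : (content M : ℤ) ∣ M i j :=
  dvd_content_iff.mp dvd_rfl i j

theorem content_dvd_content_mul_left (A : Matrix l m ℤ) (M : Matrix m n ℤ) :
    content M ∣ content (A * M) :=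
  dvd_content_iff.mpr fun _ j =>
    Finset.dvd_sum fun k _ => dvd_mul_of_dvd_right (content_dvd M k j) _

theorem content_dvd_content_mul_right (M : Matrix l m ℤ) (A : Matrix m n ℤ) :
    content M ∣ content (M * A) :=
  dvd_content_iff.mpr fun i _ =>
    Finset.dvd_sum fun k _ => dvd_mul_of_dvd_left (content_dvd M i k) _

theorem content_smul (x : ℤ) (M : Matrix m n ℤ) : content (x • M) = x.natAbs * content M := by
  simp only [content, smul_apply, smul_eq_mul, Int.natAbs_mul, Finset.gcd_mul_left, normalize_eq]

theorem content_eq_one_of_apply_eq_one {M : Matrix m n ℤ} {i : m} {j : n} (h : M i j = 1) :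
    content M = 1 :=
  Nat.dvd_one.mp (Int.natCast_dvd.mp (h ▸ content_dvd M i j))

theorem content_specialLinearGroup_mul_mul [DecidableEq m] [DecidableEq n]
    (e : SpecialLinearGroup m ℤ) (M : Matrix m n ℤ) (f : SpecialLinearGroup n ℤ) :
    content ((e : Matrix m m ℤ) * M * (f : Matrix n n ℤ)) = content M := by
  refine Nat.dvd_antisymm ?_
    ((content_dvd_content_mul_left _ _).trans (content_dvd_content_mul_right _ _))
  have hM : M = ((e⁻¹ : SpecialLinearGroup m ℤ) : Matrix m m ℤ) *
      ((e : Matrix m m ℤ) * M * (f : Matrix n n ℤ)) *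
      ((f⁻¹ : SpecialLinearGroup n ℤ) : Matrix n n ℤ) := by
    simp [← Matrix.mul_assoc, Matrix.adjugate_mul, Matrix.mul_assoc M, Matrix.mul_adjugate]
  conv_rhs => rw [hM]
  exact (content_dvd_content_mul_left _ _).trans (content_dvd_content_mul_right _ _)

end Content

section SLEquiv

variable {n R : Type*} [Fintype n] [DecidableEq n] [CommRing R]

def SLEquiv (M N : Matrix n n R) : Prop :=
  ∃ e f : SpecialLinearGroup n R, M = e * N * f

theorem SLEquiv.trans {M N P : Matrix n n R} (hMN : SLEquiv M N) (hNP : SLEquiv N P) :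
    SLEquiv M P := by
  obtain ⟨e, f, rfl⟩ := hMN
  obtain ⟨e', f', rfl⟩ := hNP
  exact ⟨e * e', f' * f, by simp [Matrix.mul_assoc]⟩

theorem SLEquiv.mul_left (e : SpecialLinearGroup n R) (M : Matrix n n R) :
    SLEquiv M (e * M) :=
  ⟨e⁻¹, 1, by simp [← Matrix.mul_assoc, Matrix.adjugate_mul]⟩

theorem SLEquiv.mul_right (M : Matrix n n R) (f : SpecialLinearGroup n R) :
    SLEquiv M (M * f) :=
  ⟨1, f⁻¹, by simp [Matrix.mul_assoc, Matrix.mul_adjugate]⟩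

end SLEquiv

section Smith

open ModularGroup

def HasSmithForm (M : Matrix (Fin 2) (Fin 2) ℤ) : Prop :=
  ∃ a q : ℤ, 0 < a ∧ SLEquiv M (a • !![1, 0; 0, q])

theorem SLEquiv.hasSmithForm {M N : Matrix (Fin 2) (Fin 2) ℤ} (hMN : SLEquiv M N)
    (hN : HasSmithForm N) : HasSmithForm M :=
  hN.imp fun _ => Exists.imp fun _ => And.imp_right hMN.trans

theorem exists_SL2_apply_mul_add_eq_gcd {x : ℤ} (hx : x ≠ 0) (y : ℤ) :
    ∃ e : SL(2, ℤ), e 0 0 * x + e 0 1 * y = Int.gcd x y := by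
  obtain ⟨x', y', -, hx', hy'⟩ := Int.exists_gcd_one (Int.gcd_pos_of_ne_zero_left y hx)
  have hbezout := Int.gcd_eq_gcd_ab x y
  have hcop : IsCoprime (Int.gcdA x y) (Int.gcdB x y) := by
    refine ⟨x', y', mul_right_cancel₀
      (Int.natCast_ne_zero.mpr (Int.gcd_pos_of_ne_zero_left y hx).ne') ?_⟩
    linear_combination -hbezout - Int.gcdA x y * hx' - Int.gcdB x y * hy'
  obtain ⟨e, he0, he1⟩ := hcop.exists_SL2_row 0
  exact ⟨e, by rw [he0, he1, hbezout]; ring⟩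

theorem exists_SLEquiv_natAbs_lt {M : Matrix (Fin 2) (Fin 2) ℤ} (h0 : M 0 0 ≠ 0)
    (h : ¬ M 0 0 ∣ M 1 0 ∨ ¬ M 0 0 ∣ M 0 1) :
    ∃ N, SLEquiv M N ∧ N 0 0 ≠ 0 ∧ (N 0 0).natAbs < (M 0 0).natAbs := by
  suffices ∃ N, SLEquiv M N ∧ ∃ y, ¬ M 0 0 ∣ y ∧ N 0 0 = Int.gcd (M 0 0) y by
    obtain ⟨N, hMN, y, hy, hN⟩ := this
    refine ⟨N, hMN, ?_, ?_⟩
    · simpa [hN] using (Int.gcd_pos_of_ne_zero_left y h0).ne'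
    · simpa [hN] using Int.gcd_lt_natAbs_left h0 hy
  rcases h with h | h
  · obtain ⟨e, he⟩ := exists_SL2_apply_mul_add_eq_gcd h0 (M 1 0)
    exact ⟨e * M, SLEquiv.mul_left e M, M 1 0, h, by simpa [Matrix.mul_apply] using he⟩
  · obtain ⟨e, he⟩ := exists_SL2_apply_mul_add_eq_gcd h0 (M 0 1)
    refine ⟨M * (e.transpose : Matrix (Fin 2) (Fin 2) ℤ), SLEquiv.mul_right M _, M 0 1, h, ?_⟩
    simpa [Matrix.mul_apply, SpecialLinearGroup.coe_transpose, mul_comm] using he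

theorem exists_SLEquiv_diagonal_of_dvd {M : Matrix (Fin 2) (Fin 2) ℤ} (h10 : M 0 0 ∣ M 1 0)
    (h01 : M 0 0 ∣ M 0 1) : ∃ d, SLEquiv M !![M 0 0, 0; 0, d] := by
  obtain ⟨k, hk⟩ := h10
  obtain ⟨l, hl⟩ := h01
  refine ⟨M 1 1 - k * M 0 0 * l, ⟨!![1, 0; k, 1], by simp [Matrix.det_fin_two_of]⟩,
    ⟨!![1, l; 0, 1], by simp [Matrix.det_fin_two_of]⟩, ?_⟩
  ext i j
  fin_cases i <;> fin_cases j <;> simp [Matrix.mul_apply, hk, hl]; ring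

theorem hasSmithForm_diagonal_of_dvd {a d : ℤ} (ha : a ≠ 0) (h : a ∣ d) :
    HasSmithForm !![a, 0; 0, d] := by
  obtain ⟨q, rfl⟩ := h
  rcases ha.lt_or_gt with hneg | hpos
  · exact ⟨-a, q, by omega, -1, 1, by ext i j; fin_cases i <;> fin_cases j <;> simp⟩
  · exact ⟨a, q, hpos, 1, 1, by ext i j; fin_cases i <;> fin_cases j <;> simp⟩

theorem hasSmithForm_of_apply_ne_zero (M : Matrix (Fin 2) (Fin 2) ℤ) (hM : M 0 0 ≠ 0) :
    HasSmithForm M := by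
  induction hk : (M 0 0).natAbs using Nat.strong_induction_on generalizing M with
  | _ k ih =>
  have descend : ∀ N, SLEquiv M N → N 0 0 ≠ 0 → (N 0 0).natAbs < k → HasSmithForm M :=
    fun N hMN hN hlt => hMN.hasSmithForm (ih _ hlt N hN rfl)
  by_cases hdvd : M 0 0 ∣ M 1 0 ∧ M 0 0 ∣ M 0 1
  · obtain ⟨d, hMd⟩ := exists_SLEquiv_diagonal_of_dvd hdvd.1 hdvd.2
    by_cases had : M 0 0 ∣ d
    · exact hMd.hasSmithForm (hasSmithForm_diagonal_of_dvd hM had)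
    -- adding the second row to the first puts `d` into the first row, next to `M 0 0 ∤ d`
    · obtain ⟨N, hN, hN0, hlt⟩ := exists_SLEquiv_natAbs_lt (M := T * !![M 0 0, 0; 0, d])
        (by simpa using hM) (Or.inr (by simpa using had))
      exact descend N (hMd.trans ((SLEquiv.mul_left T _).trans hN)) hN0
        (by simpa [← hk] using hlt)
  · obtain ⟨N, hN, hN0, hlt⟩ := exists_SLEquiv_natAbs_lt hM (not_and_or.mp hdvd)
    exact descend N hN hN0 (hk ▸ hlt)

theorem exists_SLEquiv_apply_ne_zero {M : Matrix (Fin 2) (Fin 2) ℤ} (hM : M ≠ 0) :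
    ∃ N, SLEquiv M N ∧ N 0 0 ≠ 0 := by
  obtain ⟨i, j, hij⟩ : ∃ i j, M i j ≠ 0 := by
    by_contra! h
    exact hM (Matrix.ext h)
  fin_cases i <;> fin_cases j
  · exact ⟨M, ⟨1, 1, by simp⟩, hij⟩
  · exact ⟨M * S, SLEquiv.mul_right M S, by simpa [Matrix.mul_apply] using hij⟩
  · exact ⟨S * M, SLEquiv.mul_left S M, by simpa [Matrix.mul_apply] using hij⟩
  · exact ⟨S * M * S, (SLEquiv.mul_left S M).trans (SLEquiv.mul_right _ S),
      by simpa [Matrix.mul_apply, Matrix.vecMul, dotProduct] using hij⟩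

theorem hasSmithForm_of_ne_zero {M : Matrix (Fin 2) (Fin 2) ℤ} (hM : M ≠ 0) :
    HasSmithForm M := by
  obtain ⟨N, hMN, hN⟩ := exists_SLEquiv_apply_ne_zero hM
  exact hMN.hasSmithForm (hasSmithForm_of_apply_ne_zero N hN)

end Smith

theorem exists_nat_smul_eq_map_intCast {m n : Type*} [Fintype m] [Fintype n]
    (g : Matrix m n ℚ) :
    ∃ N : ℕ, 0 < N ∧ ∃ M : Matrix m n ℤ, (N : ℚ) • g = M.map (↑) := by
  refine ⟨∏ ij : m × n, (g ij.1 ij.2).den, Finset.prod_pos fun ij _ => (g ij.1 ij.2).pos, ?_⟩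
  have hint : ∀ i j, ∃ z : ℤ, (∏ ij : m × n, (g ij.1 ij.2).den : ℕ) * g i j = z := by
    intro i j
    obtain ⟨k, hk⟩ := Finset.dvd_prod_of_mem (fun ij : m × n => (g ij.1 ij.2).den)
      (Finset.mem_univ (i, j))
    refine ⟨k * (g i j).num, ?_⟩
    rw [hk]
    push_cast
    rw [← Rat.den_mul_eq_num]
    ring
  choose M hM using hint
  exact ⟨M, Matrix.ext fun i j => hM i j⟩

theorem eq_of_smul_map_intCast_eq {m n : Type*} [Fintype m] [Fintype n] {r r' : ℚ}
    (hr : 0 < r) (hr' : 0 < r') {P P' : Matrix m n ℤ} (hP : content P = 1)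
    (hP' : content P' = 1)
    (h : r • P.map (Int.cast : ℤ → ℚ) = r' • P'.map (Int.cast : ℤ → ℚ)) :
    r = r' := by
  have hxy : (r.num * r'.den) • P = (r'.num * r.den) • P' := by
    ext i j
    have hij : r * P i j = r' * P' i j := by simpa using congrFun (congrFun h i) j
    have : ((r.num * r'.den * P i j : ℤ) : ℚ) = (r'.num * r.den * P' i j : ℤ) := by
      push_cast
      rw [← Rat.den_mul_eq_num, ← Rat.den_mul_eq_num]
      linear_combination (r.den * r'.den : ℚ) * hij
    simpa only [smul_apply, smul_eq_mul] using Int.cast_injective this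
  have habs := congrArg content hxy
  rw [content_smul, content_smul, hP, hP', mul_one, mul_one] at habs
  have hx : 0 < r.num * r'.den := mul_pos (Rat.num_pos.mpr hr) (by exact_mod_cast r'.pos)
  have hy : 0 < r'.num * r.den := mul_pos (Rat.num_pos.mpr hr') (by exact_mod_cast r.pos)
  exact Rat.eq_iff_mul_eq_mul.mpr (by omega)

end Matrix

open Matrix

theorem map_intCast_mul_mul (e : SL(2, ℤ)) (N : Matrix (Fin 2) (Fin 2) ℤ) (f : SL(2, ℤ)) :
    ((e : Matrix (Fin 2) (Fin 2) ℤ) * N * (f : Matrix (Fin 2) (Fin 2) ℤ)).map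
      (Int.cast : ℤ → ℚ) = toQ e * N.map (↑) * toQ f := by
  simp only [toQ, ← Int.coe_castRingHom, Matrix.map_mul]

theorem exists_content_eq_one_det_eq (e f : SL(2, ℤ)) (q : ℤ) :
    ∃ P : Matrix (Fin 2) (Fin 2) ℤ, content P = 1 ∧ P.det = q ∧
      toQ e * !![(1 : ℚ), 0; 0, (q : ℚ)] * toQ f = P.map (↑) := by
  refine ⟨e * !![1, 0; 0, q] * f, ?_, ?_, ?_⟩
  · rw [content_specialLinearGroup_mul_mul]
    exact content_eq_one_of_apply_eq_one (i := 0) (j := 0) rfl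
  · simp [Matrix.det_fin_two_of]
  · rw [map_intCast_mul_mul]
    congr
    ext i j
    fin_cases i <;> fin_cases j <;> simp

theorem eq_and_eq_of_smul_toQ_eq {r r' : ℚ} {q q' : ℤ} {e f e' f' : SL(2, ℤ)}
    (hr : 0 < r) (hr' : 0 < r')
    (h : r • (toQ e * !![(1 : ℚ), 0; 0, (q : ℚ)] * toQ f) =
      r' • (toQ e' * !![(1 : ℚ), 0; 0, (q' : ℚ)] * toQ f')) : r = r' ∧ q = q' := by
  obtain ⟨P, hP, hPq, hPe⟩ := exists_content_eq_one_det_eq e f q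
  obtain ⟨P', hP', hPq', hPe'⟩ := exists_content_eq_one_det_eq e' f' q'
  rw [hPe, hPe'] at h
  obtain rfl := eq_of_smul_map_intCast_eq hr hr' hP hP' h
  refine ⟨rfl, ?_⟩
  have hdet := congrArg Matrix.det h
  simp only [Matrix.det_smul, ← Int.cast_det, hPq, hPq'] at hdet
  exact_mod_cast mul_left_cancel₀ (by positivity) hdet

/-- Smith normal form over `ℚ` relative to `SL(2,ℤ)`: every nonzero
`g ∈ M(2,ℚ)` factors as `g = r • (e * s_q * f)` with `r ∈ ℚ`, `r > 0`,
`e, f ∈ SL(2,ℤ)`, `q ∈ ℤ` and `s_q = [[1,0],[0,q]]`; moreover `r` and `q`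
are uniquely determined by `g`. -/
theorem stmt5 (g : Matrix (Fin 2) (Fin 2) ℚ) (hg : g ≠ 0) :
    ∃ (r : ℚ) (q : ℤ),
      (0 < r ∧ ∃ e f : Matrix.SpecialLinearGroup (Fin 2) ℤ,
        g = r • (toQ e * !![(1 : ℚ), 0; 0, (q : ℚ)] * toQ f)) ∧
      ∀ (r' : ℚ) (q' : ℤ),
        (0 < r' ∧ ∃ e f : Matrix.SpecialLinearGroup (Fin 2) ℤ,
          g = r' • (toQ e * !![(1 : ℚ), 0; 0, (q' : ℚ)] * toQ f)) →
        r' = r ∧ q' = q := by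
  obtain ⟨N, hN, M, hM⟩ := exists_nat_smul_eq_map_intCast g
  have hM0 : M ≠ 0 := by
    rintro rfl
    exact hg (by simpa [hN.ne'] using hM)
  obtain ⟨a, q, ha, e, f, rfl⟩ := hasSmithForm_of_ne_zero hM0
  have hga : g = (a / N : ℚ) • (toQ e * !![(1 : ℚ), 0; 0, (q : ℚ)] * toQ f) := by
    refine smul_right_injective _ (Nat.cast_ne_zero.mpr hN.ne') (hM.trans ?_)
    have hS : (a • !![(1 : ℤ), 0; 0, q]).map (Int.cast : ℤ → ℚ) =
        (a : ℚ) • !![(1 : ℚ), 0; 0, (q : ℚ)] := by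
      ext i j
      fin_cases i <;> fin_cases j <;> simp
    change _ = (N : ℚ) • _
    rw [map_intCast_mul_mul, hS, smul_smul, mul_div_cancel₀ _ (by positivity),
      Matrix.mul_smul, Matrix.smul_mul]
  exact ⟨a / N, q, ⟨by positivity, e, f, hga⟩, fun r' q' ⟨hr', e', f', hg'⟩ =>
    eq_and_eq_of_smul_toQ_eq hr' (by positivity) (hg'.symm.trans hga)⟩
end

section
/- Let G be a group and H ≤ G any subgroup. Then a subset L ⊆ H is a rational subset of G if and only if it is a rational subset of H: {L ⊆ H : L ∈ Rat(G)} = Rat(H). -/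
open Pointwise
/-- The rational subsets of a monoid `M`: the smallest family of subsets
containing all finite subsets and closed under union, product, and Kleene star
(the submonoid generated by a set). -/
inductive IsRat {M : Type*} [Monoid M] : Set M → Prop
  | finite (S : Set M) : S.Finite → IsRat S
  | union {S T : Set M} : IsRat S → IsRat T → IsRat (S ∪ T)
  | mul {S T : Set M} : IsRat S → IsRat T → IsRat (S * T)
  | star {S : Set M} : IsRat S → IsRat (Submonoid.closure S : Set M)

lemma isRat_image {M N : Type*} [Monoid M] [Monoid N] (f : M →* N) {S : Set M}
    (h : IsRat S) : IsRat (f '' S) := by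
  induction h with
  | finite S hS => exact IsRat.finite _ (hS.image f)
  | union _ _ ih1 ih2 => rw [Set.image_union]; exact IsRat.union ih1 ih2
  | mul _ _ ih1 ih2 => rw [Set.image_mul]; exact IsRat.mul ih1 ih2
  | @star S' _ ih =>
      have : f '' (Submonoid.closure S' : Set M) =
          (Submonoid.closure (f '' S') : Set N) := by
        rw [← Submonoid.coe_map, MonoidHom.map_mclosure]
      rw [this]; exact IsRat.star ih

lemma preimage_mul_of_subset {G : Type*} [Group G] (H : Subgroup G)
    {A B : Set G} (hA : A ⊆ ↑H) (hB : B ⊆ ↑H) :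
    ((↑) : H → G) ⁻¹' (A * B) = ((↑) : H → G) ⁻¹' A * ((↑) : H → G) ⁻¹' B := by
  ext x
  constructor
  · rintro hx
    obtain ⟨u, hu, v, hv, huv⟩ := hx
    refine ⟨⟨u, hA hu⟩, hu, ⟨v, hB hv⟩, hv, ?_⟩
    ext; exact huv
  · rintro ⟨u, hu, v, hv, rfl⟩
    exact Set.mul_mem_mul hu hv

lemma preimage_closure_of_subset {G : Type*} [Group G] (H : Subgroup G)
    {A : Set G} (hA : A ⊆ ↑H) :
    ((↑) : H → G) ⁻¹' (Submonoid.closure A : Set G) =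
      (Submonoid.closure (((↑) : H → G) ⁻¹' A) : Set H) := by
  have hle : Submonoid.closure A ≤ H.toSubmonoid := Submonoid.closure_le.mpr hA
  ext x
  constructor
  · intro hx
    have : ∀ (g : G) (hg : g ∈ Submonoid.closure A) (hgH : g ∈ H),
        (⟨g, hgH⟩ : H) ∈ Submonoid.closure (((↑) : H → G) ⁻¹' A) := by
      intro g hg
      induction hg using Submonoid.closure_induction with
      | mem y hy => intro hyH; exact Submonoid.subset_closure (by simpa using hy)
      | one => intro h1; exact Submonoid.one_mem _
      | mul y z hy hz ihy ihz =>
          intro hyz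
          have hyH : y ∈ H := hle hy
          have hzH : z ∈ H := hle hz
          have : (⟨y * z, hyz⟩ : H) = ⟨y, hyH⟩ * ⟨z, hzH⟩ := rfl
          rw [this]
          exact Submonoid.mul_mem _ (ihy hyH) (ihz hzH)
    exact this _ hx x.2
  · intro hx
    induction hx using Submonoid.closure_induction with
    | mem y hy => exact Submonoid.subset_closure hy
    | one => exact Submonoid.one_mem _
    | mul y z _ _ ihy ihz => exact Submonoid.mul_mem _ ihy ihz

lemma key_lemma {G : Type*} [Group G] (H : Subgroup G) {S : Set G} (h : IsRat S) :
    ∀ a b : G, (fun s => a * s * b) '' S ⊆ ↑H →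
      IsRat (((↑) : H → G) ⁻¹' ((fun s => a * s * b) '' S)) := by
  induction h with
  | finite S hS =>
      intro a b _
      exact IsRat.finite _ ((hS.image _).preimage Subtype.coe_injective.injOn)
  | union hS hT ihS ihT =>
      intro a b hsub
      rw [Set.image_union] at hsub ⊢
      rw [Set.preimage_union]
      exact IsRat.union (ihS a b (fun x hx => hsub (Or.inl hx)))
        (ihT a b (fun x hx => hsub (Or.inr hx)))
  | @mul S T hS hT ihS ihT =>
      intro a b hsub
      rcases S.eq_empty_or_nonempty with rfl | ⟨s₀, hs₀⟩
      · rw [Set.empty_mul, Set.image_empty, Set.preimage_empty]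
        exact IsRat.finite _ Set.finite_empty
      rcases T.eq_empty_or_nonempty with rfl | ⟨t₀, ht₀⟩
      · rw [Set.mul_empty, Set.image_empty, Set.preimage_empty]
        exact IsRat.finite _ Set.finite_empty
      set c := s₀⁻¹ * a⁻¹ with hc
      have h1 : (fun s => a * s * c) '' S ⊆ ↑H := by
        rintro _ ⟨s, hs, rfl⟩
        have m1 : a * (s * t₀) * b ∈ H := hsub ⟨s * t₀, Set.mul_mem_mul hs ht₀, rfl⟩
        have m2 : a * (s₀ * t₀) * b ∈ H := hsub ⟨s₀ * t₀, Set.mul_mem_mul hs₀ ht₀, rfl⟩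
        show a * s * c ∈ ↑H
        have : a * s * c = (a * (s * t₀) * b) * (a * (s₀ * t₀) * b)⁻¹ := by
          rw [hc]; group
        rw [this]
        exact H.mul_mem m1 (H.inv_mem m2)
      have h2 : (fun t => c⁻¹ * t * b) '' T ⊆ ↑H := by
        rintro _ ⟨t, ht, rfl⟩
        have m1 : a * (s₀ * t) * b ∈ H := hsub ⟨s₀ * t, Set.mul_mem_mul hs₀ ht, rfl⟩
        show c⁻¹ * t * b ∈ ↑H
        have : c⁻¹ * t * b = a * (s₀ * t) * b := by rw [hc]; group
        rw [this]; exact m1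
      have heq : (fun s => a * s * b) '' (S * T) =
          ((fun s => a * s * c) '' S) * ((fun t => c⁻¹ * t * b) '' T) := by
        ext x
        constructor
        · rintro ⟨_, ⟨s, hs, t, ht, rfl⟩, rfl⟩
          refine ⟨a * s * c, ⟨s, hs, rfl⟩, c⁻¹ * t * b, ⟨t, ht, rfl⟩, ?_⟩
          group
        · rintro ⟨_, ⟨s, hs, rfl⟩, _, ⟨t, ht, rfl⟩, rfl⟩
          refine ⟨s * t, Set.mul_mem_mul hs ht, ?_⟩
          show a * (s * t) * b = _
          group
      rw [heq, preimage_mul_of_subset H h1 h2]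
      exact IsRat.mul (ihS a c h1) (ihT c⁻¹ b h2)
  | @star S hS ihS =>
      intro a b hsub
      have hab : a * b ∈ H := by
        have : a * (1 : G) * b ∈ H := hsub ⟨1, Submonoid.one_mem _, rfl⟩
        simpa using this
      have hconj : ∀ x ∈ Submonoid.closure S, a * x * a⁻¹ ∈ H := by
        intro x hx
        have m1 : a * x * b ∈ H := hsub ⟨x, hx, rfl⟩
        have : a * x * a⁻¹ = (a * x * b) * (a * b)⁻¹ := by group
        rw [this]; exact H.mul_mem m1 (H.inv_mem hab)
      have hA : (fun s => a * s * a⁻¹) '' S ⊆ ↑H := by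
        rintro _ ⟨s, hs, rfl⟩
        exact hconj s (Submonoid.subset_closure hs)
      have hAimg : (fun s => a * s * a⁻¹) '' S = (MulAut.conj a).toMonoidHom '' S := by
        apply Set.image_congr
        intro s _
        simp [MulAut.conj, mul_assoc]
      have hclo : (Submonoid.closure ((fun s => a * s * a⁻¹) '' S) : Set G) =
          (fun x => a * x * a⁻¹) '' (Submonoid.closure S : Set G) := by
        rw [hAimg, ← MonoidHom.map_mclosure]
        ext x
        simp only [Submonoid.coe_map, Set.mem_image]
        constructor
        · rintro ⟨y, hy, rfl⟩
          exact ⟨y, hy, by simp [MulAut.conj, mul_assoc]⟩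
        · rintro ⟨y, hy, rfl⟩
          exact ⟨y, hy, by simp [MulAut.conj, mul_assoc]⟩
      have heq : (fun s => a * s * b) '' (Submonoid.closure S : Set G) =
          (Submonoid.closure ((fun s => a * s * a⁻¹) '' S) : Set G) * {a * b} := by
        rw [hclo]
        ext x
        constructor
        · rintro ⟨y, hy, rfl⟩
          refine ⟨a * y * a⁻¹, ⟨y, hy, rfl⟩, a * b, rfl, ?_⟩
          group
        · rintro ⟨_, ⟨y, hy, rfl⟩, z, hz, rfl⟩
          rcases hz with rfl
          refine ⟨y, hy, ?_⟩
          show a * y * b = _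
          group
      have hclosub : (Submonoid.closure ((fun s => a * s * a⁻¹) '' S) : Set G) ⊆ ↑H :=
        Submonoid.closure_le.mpr hA
      have hsing : ({a * b} : Set G) ⊆ ↑H := by
        intro x hx; rcases hx with rfl; exact hab
      rw [heq, preimage_mul_of_subset H hclosub hsing,
        preimage_closure_of_subset H hA]
      refine IsRat.mul (IsRat.star (ihS a a⁻¹ hA)) ?_
      exact IsRat.finite _ ((Set.finite_singleton _).preimage Subtype.coe_injective.injOn)

/-- For any subgroup `H ≤ G`, the rational subsets of `G` contained in `H`
are exactly (the images in `G` of) the rational subsets of the group `H`. -/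
theorem stmt10 (G : Type*) [Group G] (H : Subgroup G) :
    {L : Set G | IsRat L ∧ L ⊆ ↑H} =
      (fun L' : Set H => ((↑) : H → G) '' L') '' {L' : Set H | IsRat L'} := by
  ext L
  constructor
  · rintro ⟨hL, hLH⟩
    refine ⟨((↑) : H → G) ⁻¹' L, ?_, ?_⟩
    · have h1 : (fun s => (1 : G) * s * 1) '' L = L := by
        simp
      have := key_lemma H hL 1 1 (by rw [h1]; exact hLH)
      rwa [h1] at this
    · simpa using Set.image_preimage_eq_of_subset (by simpa using hLH)
  · rintro ⟨L', hL', rfl⟩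
    refine ⟨isRat_image H.subtype hL', ?_⟩
    rintro _ ⟨x, _, rfl⟩
    exact x.2
end

section
/- If a subgroup H of a group G is a rational subset of G, then H is finitely generated. -/
open Pointwise
namespace AniSei

variable {G : Type*} [Group G]

/-- Paths in a `G`-labeled automaton with edge set `E`. -/
inductive Path {Q : Type} (E : Set (Q × G × Q)) : Q → G → Q → Prop
  | nil (q : Q) : Path E q 1 q
  | cons {p : Q} {g : G} {q : Q} {x : G} {r : Q} :
      (p, g, q) ∈ E → Path E q x r → Path E p (g * x) r

/-- The set of elements of `G` accepted by the automaton. -/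
def accepts {Q : Type} (E : Set (Q × G × Q)) (st ac : Set Q) : Set G :=
  {x | ∃ p ∈ st, ∃ r ∈ ac, Path E p x r}

lemma Path.append {Q : Type} {E : Set (Q × G × Q)} {p q r : Q} {x y : G}
    (h1 : Path E p x q) (h2 : Path E q y r) : Path E p (x * y) r := by
  induction h1 with
  | nil q => simpa using h2
  | cons he _ ih => rw [mul_assoc]; exact Path.cons he (ih h2)

lemma Path.map {Q Q' : Type} {E : Set (Q × G × Q)} {E' : Set (Q' × G × Q')}
    (f : Q → Q') (hf : ∀ p g q, (p, g, q) ∈ E → (f p, g, f q) ∈ E')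
    {p : Q} {x : G} {q : Q} (h : Path E p x q) : Path E' (f p) x (f q) := by
  induction h with
  | nil q => exact Path.nil _
  | cons he _ ih => exact Path.cons (hf _ _ _ he) ih

/-- Core lemma (Anissimov–Seifert): a subgroup which is the accepted set of a
finite `G`-labeled automaton is finitely generated. -/
lemma core {Q : Type} [Finite Q] {E : Set (Q × G × Q)} (hE : E.Finite)
    {st ac : Set Q} (H : Subgroup G) (hacc : accepts E st ac = (H : Set G)) :
    H.FG := by
  classical
  set reach : Q → Prop := fun q => ∃ p ∈ st, ∃ x : G, Path E p x q with hreach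
  set coreach : Q → Prop := fun q => ∃ r ∈ ac, ∃ x : G, Path E q x r with hcoreach
  -- choose access elements
  have hu : ∀ q : Q, ∃ g : G, (reach q → ∃ p ∈ st, Path E p g q) ∧ (q ∈ st → g = 1) := by
    intro q
    by_cases hq : q ∈ st
    · exact ⟨1, fun _ => ⟨q, hq, Path.nil q⟩, fun _ => rfl⟩
    · by_cases hr : reach q
      · obtain ⟨p, hp, x, hx⟩ := hr
        exact ⟨x, fun _ => ⟨p, hp, hx⟩, fun h => absurd h hq⟩
      · exact ⟨1, fun h => absurd h hr, fun _ => rfl⟩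
  have hv : ∀ q : Q, ∃ g : G, (coreach q → ∃ r ∈ ac, Path E q g r) ∧ (q ∈ ac → g = 1) := by
    intro q
    by_cases hq : q ∈ ac
    · exact ⟨1, fun _ => ⟨q, hq, Path.nil q⟩, fun _ => rfl⟩
    · by_cases hr : coreach q
      · obtain ⟨r, hrr, x, hx⟩ := hr
        exact ⟨x, fun _ => ⟨r, hrr, hx⟩, fun h => absurd h hq⟩
      · exact ⟨1, fun h => absurd h hr, fun _ => rfl⟩
  choose u hu1 hu2 using hu
  choose v hv1 hv2 using hv
  -- the finite generating set
  set T : Set G :=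
      (fun t : Q × G × Q => u t.1 * t.2.1 * v t.2.2) ''
        {t ∈ E | reach t.1 ∧ coreach t.2.2} ∪
      (fun q : Q => u q * v q) '' {q : Q | reach q ∧ coreach q} with hT
  have hTfin : T.Finite := by
    apply Set.Finite.union
    · exact ((hE.subset (Set.sep_subset _ _)).image _)
    · exact (Set.toFinite _).image _
  -- T ⊆ H
  have hTH : T ⊆ (H : Set G) := by
    rintro x (⟨⟨p, g, q⟩, ⟨hEpq, hrp, hcq⟩, rfl⟩ | ⟨q, ⟨hrq, hcq⟩, rfl⟩)
    · obtain ⟨p0, hp0, hpath⟩ := hu1 p hrp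
      obtain ⟨r0, hr0, hqpath⟩ := hv1 q hcq
      have : Path E p0 (u p * (g * v q)) r0 :=
        hpath.append (Path.cons hEpq hqpath)
      rw [← hacc]
      refine ⟨p0, hp0, r0, hr0, ?_⟩
      show Path E p0 (u p * g * v q) r0
      rw [show u p * g * v q = u p * (g * v q) by group]
      exact this
    · obtain ⟨p0, hp0, hpath⟩ := hu1 q hrq
      obtain ⟨r0, hr0, hqpath⟩ := hv1 q hcq
      rw [← hacc]
      exact ⟨p0, hp0, r0, hr0, hpath.append hqpath⟩
  -- every accepted element lies in the closure of T
  have key : ∀ {p x r}, Path E p x r → reach p → r ∈ ac → u p * x ∈ Subgroup.closure T := by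
    intro p x r h
    induction h with
    | nil q =>
      intro hrq hqa
      have hcq : coreach q := ⟨q, hqa, 1, Path.nil q⟩
      have : u q * v q ∈ T := Or.inr ⟨q, ⟨hrq, hcq⟩, rfl⟩
      rw [mul_one, show u q = u q * v q by rw [hv2 q hqa, mul_one]]
      exact Subgroup.subset_closure this
    | @cons p g q x' r hEe htail ih =>
      intro hrp hra
      have hrq : reach q := by
        obtain ⟨p0, hp0, y, hy⟩ := hrp
        exact ⟨p0, hp0, y * (g * 1), hy.append (Path.cons hEe (Path.nil q))⟩
      have hcq : coreach q := ⟨r, hra, x', htail⟩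
      have hcp : coreach p := ⟨r, hra, g * x', Path.cons hEe htail⟩
      have h1 : u p * g * v q ∈ T := Or.inl ⟨(p, g, q), ⟨hEe, hrp, hcq⟩, rfl⟩
      have h2 : u q * v q ∈ T := Or.inr ⟨q, ⟨hrq, hcq⟩, rfl⟩
      have h3 := ih hrq hra
      have : u p * (g * x') = (u p * g * v q) * ((u q * v q)⁻¹ * (u q * x')) := by group
      rw [this]
      exact mul_mem (Subgroup.subset_closure h1)
        (mul_mem (inv_mem (Subgroup.subset_closure h2)) h3)
  have hHT : (H : Set G) ⊆ (Subgroup.closure T : Set G) := by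
    intro x hx
    rw [← hacc] at hx
    obtain ⟨p, hp, r, hr, hpath⟩ := hx
    have hrp : reach p := ⟨p, hp, 1, Path.nil p⟩
    have := key hpath hrp hr
    rwa [hu2 p hp, one_mul] at this
  rw [Subgroup.fg_iff]
  refine ⟨T, le_antisymm ((Subgroup.closure_le H).2 hTH) (fun x hx => hHT hx), hTfin⟩

/-- Every rational subset of `G` is accepted by a finite `G`-labeled automaton. -/
lemma isRat_exists {S : Set G} (h : IsRat S) :
    ∃ (Q : Type) (_ : Finite Q) (E : Set (Q × G × Q)), E.Finite ∧
      ∃ st ac : Set Q, accepts E st ac = S := by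
  induction h with
  | finite S hS =>
    refine ⟨Bool, inferInstance, (fun g : G => (false, g, true)) '' S, hS.image _,
      {false}, {true}, ?_⟩
    have tail1 : ∀ {y : G}, Path ((fun g : G => ((false : Bool), g, true)) '' S) true y true →
        y = 1 := by
      intro y hy
      cases hy with
      | nil => rfl
      | cons he' _ =>
        obtain ⟨g', -, heq'⟩ := he'
        simp [Prod.ext_iff] at heq'
    ext x
    constructor
    · rintro ⟨p, rfl, r, rfl, hpath⟩
      cases hpath with
      | cons he htail =>
        rename_i g0 q0 x0
        obtain ⟨g, hg, heq⟩ := he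
        obtain ⟨rfl, rfl⟩ : g = g0 ∧ (true : Bool) = q0 := by
          simpa [Prod.ext_iff] using heq
        rw [tail1 htail, mul_one]
        exact hg
    · intro hx
      refine ⟨false, rfl, true, rfl, ?_⟩
      rw [show x = x * 1 by rw [mul_one]]
      exact Path.cons ⟨x, hx, rfl⟩ (Path.nil true)
  | union h1 h2 ih1 ih2 =>
    obtain ⟨Q1, _, E1, hE1, st1, ac1, hacc1⟩ := ih1
    obtain ⟨Q2, _, E2, hE2, st2, ac2, hacc2⟩ := ih2
    refine ⟨Q1 ⊕ Q2, inferInstance,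
      (fun t : Q1 × G × Q1 => ((Sum.inl t.1 : Q1 ⊕ Q2), t.2.1, Sum.inl t.2.2)) '' E1 ∪
      (fun t : Q2 × G × Q2 => ((Sum.inr t.1 : Q1 ⊕ Q2), t.2.1, Sum.inr t.2.2)) '' E2,
      (hE1.image _).union (hE2.image _),
      Sum.inl '' st1 ∪ Sum.inr '' st2, Sum.inl '' ac1 ∪ Sum.inr '' ac2, ?_⟩
    set E := (fun t : Q1 × G × Q1 => ((Sum.inl t.1 : Q1 ⊕ Q2), t.2.1, Sum.inl t.2.2)) '' E1 ∪
      (fun t : Q2 × G × Q2 => ((Sum.inr t.1 : Q1 ⊕ Q2), t.2.1, Sum.inr t.2.2)) '' E2 with hEdef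
    have decomp : ∀ {s x r}, Path E s x r →
        (∀ p, s = Sum.inl p → ∃ q, r = Sum.inl q ∧ Path E1 p x q) ∧
        (∀ p, s = Sum.inr p → ∃ q, r = Sum.inr q ∧ Path E2 p x q) := by
      intro s x r h
      induction h with
      | nil q =>
        exact ⟨fun p hp => ⟨p, hp, Path.nil p⟩, fun p hp => ⟨p, hp, Path.nil p⟩⟩
      | @cons s g q x' r he htail ih =>
        constructor
        · rintro p rfl
          rcases he with ⟨⟨a, b, c⟩, ht, heq⟩ | ⟨⟨a, b, c⟩, ht, heq⟩
          · obtain ⟨rfl, rfl, rfl⟩ : a = p ∧ b = g ∧ Sum.inl c = q := by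
              simpa [Prod.ext_iff] using heq
            obtain ⟨q', rfl, hq'⟩ := ih.1 c rfl
            exact ⟨q', rfl, Path.cons ht hq'⟩
          · exfalso; simp [Prod.ext_iff] at heq
        · rintro p rfl
          rcases he with ⟨⟨a, b, c⟩, ht, heq⟩ | ⟨⟨a, b, c⟩, ht, heq⟩
          · exfalso; simp [Prod.ext_iff] at heq
          · obtain ⟨rfl, rfl, rfl⟩ : a = p ∧ b = g ∧ Sum.inr c = q := by
              simpa [Prod.ext_iff] using heq
            obtain ⟨q', rfl, hq'⟩ := ih.2 c rfl
            exact ⟨q', rfl, Path.cons ht hq'⟩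
    ext x
    constructor
    · rintro ⟨s, hs, r, hr, hpath⟩
      rcases hs with ⟨p, hp, rfl⟩ | ⟨p, hp, rfl⟩
      · obtain ⟨q, rfl, hq⟩ := (decomp hpath).1 p rfl
        left
        rw [← hacc1]
        refine ⟨p, hp, q, ?_, hq⟩
        rcases hr with ⟨a, ha, heq⟩ | ⟨a, ha, heq⟩
        · rwa [(Sum.inl.injEq a q).mp heq] at ha
        · exact absurd heq (by simp)
      · obtain ⟨q, rfl, hq⟩ := (decomp hpath).2 p rfl
        right
        rw [← hacc2]
        refine ⟨p, hp, q, ?_, hq⟩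
        rcases hr with ⟨a, ha, heq⟩ | ⟨a, ha, heq⟩
        · exact absurd heq (by simp)
        · rwa [(Sum.inr.injEq a q).mp heq] at ha
    · rintro (hx | hx)
      · rw [← hacc1] at hx
        obtain ⟨p, hp, r, hr, hpath⟩ := hx
        exact ⟨Sum.inl p, Or.inl ⟨p, hp, rfl⟩, Sum.inl r, Or.inl ⟨r, hr, rfl⟩,
          hpath.map Sum.inl (fun a b c hm => Or.inl ⟨(a, b, c), hm, rfl⟩)⟩
      · rw [← hacc2] at hx
        obtain ⟨p, hp, r, hr, hpath⟩ := hx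
        exact ⟨Sum.inr p, Or.inr ⟨p, hp, rfl⟩, Sum.inr r, Or.inr ⟨r, hr, rfl⟩,
          hpath.map Sum.inr (fun a b c hm => Or.inr ⟨(a, b, c), hm, rfl⟩)⟩
  | mul h1 h2 ih1 ih2 =>
    rename_i S1 S2
    obtain ⟨Q1, _, E1, hE1, st1, ac1, hacc1⟩ := ih1
    obtain ⟨Q2, _, E2, hE2, st2, ac2, hacc2⟩ := ih2
    refine ⟨Q1 ⊕ Q2, inferInstance,
      (fun t : Q1 × G × Q1 => ((Sum.inl t.1 : Q1 ⊕ Q2), t.2.1, Sum.inl t.2.2)) '' E1 ∪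
      (fun t : Q2 × G × Q2 => ((Sum.inr t.1 : Q1 ⊕ Q2), t.2.1, Sum.inr t.2.2)) '' E2 ∪
      (fun t : Q1 × Q2 => ((Sum.inl t.1 : Q1 ⊕ Q2), (1 : G), Sum.inr t.2)) '' (ac1 ×ˢ st2),
      ((hE1.image _).union (hE2.image _)).union ((Set.toFinite _).image _),
      Sum.inl '' st1, Sum.inr '' ac2, ?_⟩
    set E := (fun t : Q1 × G × Q1 => ((Sum.inl t.1 : Q1 ⊕ Q2), t.2.1, Sum.inl t.2.2)) '' E1 ∪
      (fun t : Q2 × G × Q2 => ((Sum.inr t.1 : Q1 ⊕ Q2), t.2.1, Sum.inr t.2.2)) '' E2 ∪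
      (fun t : Q1 × Q2 => ((Sum.inl t.1 : Q1 ⊕ Q2), (1 : G), Sum.inr t.2)) '' (ac1 ×ˢ st2)
      with hEdef
    have decomp : ∀ {s x r}, Path E s x r →
        (∀ p, s = Sum.inr p → ∃ q, r = Sum.inr q ∧ Path E2 p x q) ∧
        (∀ p t, s = Sum.inl p → r = Sum.inr t →
          ∃ y z a b, x = y * z ∧ Path E1 p y a ∧ a ∈ ac1 ∧ b ∈ st2 ∧ Path E2 b z t) := by
      intro s x r h
      induction h with
      | nil q =>
        refine ⟨fun p hp => ⟨p, hp, Path.nil p⟩, ?_⟩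
        rintro p t rfl ht
        exact absurd ht (by simp)
      | @cons s g q x' r he htail ih =>
        constructor
        · rintro p rfl
          rcases he with (⟨⟨a, b, c⟩, ht, heq⟩ | ⟨⟨a, b, c⟩, ht, heq⟩) | ⟨⟨a, c⟩, ht, heq⟩
          · exfalso; simp [Prod.ext_iff] at heq
          · obtain ⟨rfl, rfl, rfl⟩ : a = p ∧ b = g ∧ Sum.inr c = q := by
              simpa [Prod.ext_iff] using heq
            obtain ⟨q', rfl, hq'⟩ := ih.1 c rfl
            exact ⟨q', rfl, Path.cons ht hq'⟩
          · exfalso; simp [Prod.ext_iff] at heq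
        · rintro p t rfl rfl
          rcases he with (⟨⟨a, b, c⟩, ht, heq⟩ | ⟨⟨a, b, c⟩, ht, heq⟩) | ⟨⟨a, c⟩, ht, heq⟩
          · obtain ⟨rfl, rfl, rfl⟩ : a = p ∧ b = g ∧ Sum.inl c = q := by
              simpa [Prod.ext_iff] using heq
            obtain ⟨y, z, a', b', hx, hp1, ha1, hb1, hp2⟩ := ih.2 c t rfl rfl
            exact ⟨b * y, z, a', b', by rw [hx, mul_assoc], Path.cons ht hp1, ha1, hb1, hp2⟩
          · exfalso; simp [Prod.ext_iff] at heq
          · obtain ⟨rfl, rfl, rfl⟩ : a = p ∧ (1 : G) = g ∧ Sum.inr c = q := by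
              simpa [Prod.ext_iff] using heq
            obtain ⟨q', hq', hp2⟩ := ih.1 c rfl
            obtain rfl : q' = t := by simpa using hq'.symm
            exact ⟨1, x', a, c, by rw [one_mul], Path.nil a, ht.1, ht.2, hp2⟩
    ext x
    constructor
    · rintro ⟨s, ⟨p, hp, rfl⟩, r, ⟨t, ht, rfl⟩, hpath⟩
      obtain ⟨y, z, a, b, rfl, hp1, ha1, hb1, hp2⟩ := (decomp hpath).2 p t rfl rfl
      have hy : y ∈ S1 := hacc1 ▸ ⟨p, hp, a, ha1, hp1⟩
      have hz : z ∈ S2 := hacc2 ▸ ⟨b, hb1, t, ht, hp2⟩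
      exact Set.mul_mem_mul hy hz
    · intro hx
      rw [Set.mem_mul] at hx
      obtain ⟨y, hy, z, hz, rfl⟩ := hx
      rw [← hacc1] at hy
      rw [← hacc2] at hz
      obtain ⟨p, hp, a, ha, hp1⟩ := hy
      obtain ⟨b, hb, t, ht, hp2⟩ := hz
      refine ⟨Sum.inl p, ⟨p, hp, rfl⟩, Sum.inr t, ⟨t, ht, rfl⟩, ?_⟩
      have P1 : Path E (Sum.inl p) y (Sum.inl a) :=
        hp1.map Sum.inl (fun a b c hm => Or.inl (Or.inl ⟨(a, b, c), hm, rfl⟩))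
      have P2 : Path E (Sum.inr b) z (Sum.inr t) :=
        hp2.map Sum.inr (fun a b c hm => Or.inl (Or.inr ⟨(a, b, c), hm, rfl⟩))
      have Pb : Path E (Sum.inl a) (1 * z) (Sum.inr t) :=
        Path.cons (Or.inr ⟨(a, b), ⟨ha, hb⟩, rfl⟩) P2
      have := P1.append Pb
      rwa [one_mul] at this
  | star h1 ih1 =>
    rename_i S1
    obtain ⟨Q1, _, E1, hE1, st1, ac1, hacc1⟩ := ih1
    refine ⟨Option Q1, Finite.of_equiv (Q1 ⊕ PUnit.{1}) (Equiv.optionEquivSumPUnit.{0, 0} Q1).symm,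
      (fun t : Q1 × G × Q1 => ((some t.1 : Option Q1), t.2.1, some t.2.2)) '' E1 ∪
      (fun s : Q1 => ((none : Option Q1), (1 : G), some s)) '' st1 ∪
      (fun a : Q1 => ((some a : Option Q1), (1 : G), none)) '' ac1,
      ((hE1.image _).union ((Set.toFinite _).image _)).union ((Set.toFinite _).image _),
      {none}, {none}, ?_⟩
    set E := (fun t : Q1 × G × Q1 => ((some t.1 : Option Q1), t.2.1, some t.2.2)) '' E1 ∪
      (fun s : Q1 => ((none : Option Q1), (1 : G), some s)) '' st1 ∪
      (fun a : Q1 => ((some a : Option Q1), (1 : G), none)) '' ac1 with hEdef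
    have decomp : ∀ {s x r}, Path E s x r → r = none →
        (s = none → x ∈ Submonoid.closure S1) ∧
        (∀ p, s = some p → ∃ y z a, x = y * z ∧ Path E1 p y a ∧ a ∈ ac1 ∧
          z ∈ Submonoid.closure S1) := by
      intro s x r h
      induction h with
      | nil q =>
        rintro rfl
        refine ⟨fun _ => Submonoid.one_mem _, ?_⟩
        rintro p hp
        exact absurd hp (by simp)
      | @cons s g q x' r he htail ih =>
        rintro rfl
        constructor
        · rintro rfl
          rcases he with (⟨⟨a, b, c⟩, ht, heq⟩ | ⟨a, ht, heq⟩) | ⟨a, ht, heq⟩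
          · exfalso; simp [Prod.ext_iff] at heq
          · obtain ⟨rfl, rfl⟩ : (1 : G) = g ∧ some a = q := by
              simpa [Prod.ext_iff] using heq
            obtain ⟨y, z, a', hx, hp1, ha1, hz⟩ := (ih rfl).2 a rfl
            have hy : y ∈ S1 := hacc1 ▸ ⟨a, ht, a', ha1, hp1⟩
            rw [hx, one_mul]
            exact mul_mem (Submonoid.subset_closure hy) hz
          · exfalso; simp [Prod.ext_iff] at heq
        · rintro p rfl
          rcases he with (⟨⟨a, b, c⟩, ht, heq⟩ | ⟨a, ht, heq⟩) | ⟨a, ht, heq⟩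
          · obtain ⟨rfl, rfl, rfl⟩ : a = p ∧ b = g ∧ some c = q := by
              simpa [Prod.ext_iff] using heq
            obtain ⟨y, z, a', hx, hp1, ha1, hz⟩ := (ih rfl).2 c rfl
            exact ⟨b * y, z, a', by rw [hx, mul_assoc], Path.cons ht hp1, ha1, hz⟩
          · exfalso; simp [Prod.ext_iff] at heq
          · obtain ⟨rfl, rfl, rfl⟩ : a = p ∧ (1 : G) = g ∧ (none : Option Q1) = q := by
              simpa [Prod.ext_iff] using heq
            exact ⟨1, x', a, by rw [one_mul], Path.nil a, ht, (ih rfl).1 rfl⟩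
    ext x
    constructor
    · rintro ⟨s, rfl, r, rfl, hpath⟩
      exact (decomp hpath rfl).1 rfl
    · intro hx
      refine Submonoid.closure_induction ?_ ?_ ?_ hx
      · intro y hy
        rw [← hacc1] at hy
        obtain ⟨p, hp, a, ha, hp1⟩ := hy
        refine ⟨none, rfl, none, rfl, ?_⟩
        have P1 : Path E (some p) y (some a) :=
          hp1.map some (fun a b c hm => Or.inl (Or.inl ⟨(a, b, c), hm, rfl⟩))
        have Pexit : Path E (some a) (1 * 1) none :=
          Path.cons (Or.inr ⟨a, ha, rfl⟩) (Path.nil none)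
        have Penter : Path E none (1 * (y * (1 * 1))) none :=
          Path.cons (Or.inl (Or.inr ⟨p, hp, rfl⟩)) (P1.append Pexit)
        simpa using Penter
      · exact ⟨none, rfl, none, rfl, Path.nil none⟩
      · rintro y z - - ⟨p, rfl, r, rfl, hy⟩ ⟨p', rfl, r', rfl, hz⟩
        exact ⟨none, rfl, none, rfl, hy.append hz⟩

end AniSei

/-- Anissimov–Seifert: a subgroup of a group `G` which is a rational subset of
`G` is finitely generated. -/
theorem stmt11 (G : Type*) [Group G] (H : Subgroup G) (h : IsRat (H : Set G)) :
    H.FG := by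
  obtain ⟨Q, _, E, hE, st, ac, hacc⟩ := AniSei.isRat_exists h
  exact AniSei.core hE H hacc
end

section
/- A monoid M is finitely generated if and only if every recognizable subset of M is rational (McKnight's theorem). -/
/-!
If `A` generates `M` and `φ : M →* N` with `N` finite, read `φ` as an automaton with state
set `N` and transitions `p ↦ p * φ a` for `a ∈ A`. Kleene's state-elimination argument shows
that the elements read along runs `p → q` whose intermediate states lie in a set `K` form a
rational set, by induction on `K`; with `K = N` and `p = 1` these are the fibres of `φ`, and a
recognizable set is a finite union of fibres. Conversely, every rational set lies in the
submonoid generated by the finitely many elements occurring in its expression, and `M` itself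
is recognizable.
-/

open Pointwise
/-- A subset `L` of a monoid `M` is recognizable if it is saturated by a
homomorphism to some finite monoid. -/
def IsRec {M : Type*} [Monoid M] (L : Set M) : Prop :=
  ∃ (N : Type) (_ : Monoid N) (_ : Finite N) (φ : M →* N), φ ⁻¹' (φ '' L) = L

namespace IsRat

variable {M : Type*} [Monoid M]

theorem biUnion {ι : Type*} {s : Set ι} (hs : s.Finite) {f : ι → Set M}
    (hf : ∀ i ∈ s, IsRat (f i)) : IsRat (⋃ i ∈ s, f i) := by
  induction s, hs using Set.Finite.induction_on with
  | empty => simpa using IsRat.finite ∅ Set.finite_empty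
  | @insert i s _ _ ih =>
    rw [Set.biUnion_insert]
    exact (hf i (Set.mem_insert i s)).union (ih fun j hj => hf j (Set.mem_insert_of_mem i hj))

theorem exists_finite_subset_closure {S : Set M} (hS : IsRat S) :
    ∃ T : Set M, T.Finite ∧ S ⊆ Submonoid.closure T := by
  induction hS with
  | finite S hS => exact ⟨S, hS, Submonoid.subset_closure⟩
  | union _ _ ihS ihT =>
    obtain ⟨T₁, hT₁, hS⟩ := ihS
    obtain ⟨T₂, hT₂, hT⟩ := ihT
    exact ⟨T₁ ∪ T₂, hT₁.union hT₂, Set.union_subset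
      (hS.trans (Submonoid.closure_mono Set.subset_union_left))
      (hT.trans (Submonoid.closure_mono Set.subset_union_right))⟩
  | mul _ _ ihS ihT =>
    obtain ⟨T₁, hT₁, hS⟩ := ihS
    obtain ⟨T₂, hT₂, hT⟩ := ihT
    exact ⟨T₁ ∪ T₂, hT₁.union hT₂, Set.mul_subset_iff.2 fun x hx y hy => Submonoid.mul_mem _
      (Submonoid.closure_mono Set.subset_union_left (hS hx))
      (Submonoid.closure_mono Set.subset_union_right (hT hy))⟩
  | star _ ih =>
    obtain ⟨T, hT, hS⟩ := ih
    exact ⟨T, hT, Submonoid.closure_le.2 hS⟩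

end IsRat

section Kleene

variable {M N : Type*} [Monoid M] [Monoid N] (φ : M →* N) (A : Set M)

/-- `Run φ A K p q m`: `m` is the product of a word over `A` whose run from `p`, along
`p ↦ p * φ a`, ends in `q` and passes only through states of `K` in between. -/
inductive Run (K : Set N) : N → N → M → Prop
  | nil (p : N) : Run K p p 1
  | single {a : M} (p : N) : a ∈ A → Run K p (p * φ a) a
  | cons {a m : M} {p q : N} : a ∈ A → p * φ a ∈ K → Run K (p * φ a) q m → Run K p q (a * m)

def runSet (K : Set N) (p q : N) : Set M := {m | Run φ A K p q m}

variable {φ A} {K : Set N} {p q r : N} {m u v : M}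

theorem Run.mul_map_eq (h : Run φ A K p q m) : p * φ m = q := by
  induction h with
  | nil => simp
  | single => rfl
  | cons _ _ _ ih => rwa [map_mul, ← mul_assoc]

theorem Run.mono {K' : Set N} (hK : K ⊆ K') (h : Run φ A K p q m) : Run φ A K' p q m := by
  induction h with
  | nil => exact .nil _
  | single _ ha => exact .single _ ha
  | cons ha hK' _ ih => exact .cons ha (hK hK') ih

theorem Run.mul (hu : Run φ A K p r u) (hv : Run φ A K r q v) :
    Run φ A (insert r K) p q (u * v) := by
  induction hu with
  | nil => simpa using hv.mono (Set.subset_insert _ K)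
  | single _ ha =>
    cases hv with
    | nil => simpa using Run.single _ ha
    | single _ hb => exact .cons ha (Set.mem_insert _ K) (.single _ hb)
    | cons hb hK h =>
      exact .cons ha (Set.mem_insert _ K) ((Run.cons hb hK h).mono (Set.subset_insert _ K))
  | cons ha hK _ ih => simpa [mul_assoc] using Run.cons ha (Set.mem_insert_of_mem _ hK) (ih hv)

theorem runSet_empty_subset : runSet φ A ∅ p q ⊆ insert 1 A := by
  rintro m (_ | ⟨_, ha⟩ | ⟨_, hK, _⟩)
  · exact Set.mem_insert 1 A
  · exact Set.mem_insert_of_mem 1 ha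
  · exact absurd hK (Set.notMem_empty _)

theorem Run.mul_of_mem (hr : r ∈ K) (hu : Run φ A K p r u) (hv : Run φ A K r q v) :
    Run φ A K p q (u * v) := by
  simpa [Set.insert_eq_of_mem hr] using hu.mul hv

theorem closure_runSet_subset :
    (Submonoid.closure (runSet φ A K r r) : Set M) ⊆ runSet φ A (insert r K) r r := by
  intro m hm
  induction hm using Submonoid.closure_induction with
  | mem m hm => exact Run.mono (Set.subset_insert r K) hm
  | one => exact .nil r
  | mul u v _ _ hu hv => exact Run.mul_of_mem (Set.mem_insert r K) hu hv

/-- Kleene's state-elimination identity: cut a run at its visits to `r`. -/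
theorem runSet_insert :
    runSet φ A (insert r K) p q = runSet φ A K p q ∪
      runSet φ A K p r * Submonoid.closure (runSet φ A K r r) * runSet φ A K r q := by
  refine Set.Subset.antisymm (fun m hm => ?_) ?_
  · induction hm with
    | nil p => exact .inl (.nil p)
    | single p ha => exact .inl (.single p ha)
    | @cons a m p q ha hstate _ ih =>
      rcases hstate with rfl | hstate
      · right
        have hm : m ∈ (Submonoid.closure (runSet φ A K (p * φ a) (p * φ a)) : Set M) *
            runSet φ A K (p * φ a) q := by
          rcases ih with hm | ⟨_, ⟨u, hu, c, hc, rfl⟩, v, hv, rfl⟩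
          · simpa using Set.mul_mem_mul (Submonoid.one_mem _) hm
          · exact Set.mul_mem_mul (Submonoid.mul_mem _ (Submonoid.subset_closure hu) hc) hv
        obtain ⟨c, hc, v, hv, rfl⟩ := hm
        rw [← mul_assoc]
        exact Set.mul_mem_mul (Set.mul_mem_mul (Run.single p ha) hc) hv
      · rcases ih with hm | ⟨_, ⟨u, hu, c, hc, rfl⟩, v, hv, rfl⟩
        · exact .inl (.cons ha hstate hm)
        · right
          rw [show a * (u * c * v) = a * u * c * v by simp only [mul_assoc]]
          exact Set.mul_mem_mul (Set.mul_mem_mul (Run.cons ha hstate hu) hc) hv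
  · rintro m (hm | ⟨_, ⟨u, hu, c, hc, rfl⟩, v, hv, rfl⟩)
    · exact Run.mono (Set.subset_insert r K) hm
    · have hr : r ∈ insert r K := Set.mem_insert r K
      exact (((Run.mono (Set.subset_insert r K) hu).mul_of_mem hr
        (closure_runSet_subset hc)).mul_of_mem hr (Run.mono (Set.subset_insert r K) hv))

theorem isRat_runSet (hA : A.Finite) (hK : K.Finite) (p q : N) : IsRat (runSet φ A K p q) := by
  induction K, hK using Set.Finite.induction_on generalizing p q with
  | empty => exact .finite _ ((hA.insert 1).subset runSet_empty_subset)
  | @insert r K _ _ ih =>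
    rw [runSet_insert]
    exact (ih p q).union (((ih p r).mul (ih r r).star).mul (ih r q))

theorem run_univ_of_mem_closure (hm : m ∈ Submonoid.closure A) (p : N) :
    Run φ A Set.univ p (p * φ m) m := by
  induction hm using Submonoid.closure_induction_left generalizing p with
  | one => simpa using Run.nil (φ := φ) (A := A) (K := Set.univ) p
  | mul_left a ha m _ ih =>
    simpa [mul_assoc] using Run.cons ha (Set.mem_univ _) (ih (p * φ a))

theorem runSet_univ (hA : Submonoid.closure A = ⊤) :
    runSet φ A Set.univ p q = {m | p * φ m = q} := by
  refine Set.Subset.antisymm (fun m hm => hm.mul_map_eq) ?_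
  rintro m rfl
  exact run_univ_of_mem_closure (hA ▸ Submonoid.mem_top m) p

end Kleene

theorem isRat_of_isRec {M : Type*} [Monoid M] (hM : Monoid.FG M) {L : Set M} (hL : IsRec L) :
    IsRat L := by
  obtain ⟨N, _, _, φ, hφ⟩ := hL
  obtain ⟨A, hA, hAfin⟩ := Monoid.fg_iff.1 hM
  rw [← hφ, ← Set.biUnion_preimage_singleton]
  refine IsRat.biUnion (Set.toFinite _) fun n _ => ?_
  have hfibre : φ ⁻¹' {n} = runSet φ A Set.univ 1 n := by
    rw [runSet_univ hA]; simp [Set.preimage]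
  rw [hfibre]
  exact isRat_runSet hAfin Set.finite_univ 1 n

theorem isRec_univ {M : Type*} [Monoid M] : IsRec (Set.univ : Set M) :=
  ⟨Unit, inferInstance, inferInstance, 1, by simp⟩

/-- McKnight's theorem: a monoid `M` is finitely generated if and only if every
recognizable subset of `M` is rational. -/
theorem stmt13 (M : Type) [Monoid M] :
    Monoid.FG M ↔ ∀ L : Set M, IsRec L → IsRat L := by
  refine ⟨fun hM L => isRat_of_isRec hM, fun h => ?_⟩
  obtain ⟨T, hT, hsub⟩ := (h _ isRec_univ).exists_finite_subset_closure
  exact Monoid.fg_iff.2 ⟨T, eq_top_iff.2 fun m _ => hsub (Set.mem_univ m), hT⟩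
end

section
/- Let H be a subgroup of a group G, and suppose G is contained in a monoid M such that M \ G is an ideal of M (or empty). Then the family FRAT(M,H) of finite unions of sets L₀g₁L₁⋯g_tL_t with L_i ∈ Rat(H) and g_i ∈ M equals the smallest family R of subsets of M that contains all finite subsets of M, is closed under finite union and concatenation, and is closed under Kleene star of members of R that are contained in H. -/
open Pointwise
/-- The product of a finite list of subsets of a monoid. -/
def prodList {M : Type*} [Monoid M] : List (Set M) → Set M
  | [] => {1}
  | S :: l => S * prodList l

/-- A flat product over a submonoid `H`: a product `L₀ g₁ L₁ ⋯ g_t L_t` where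
each factor is either (the image in `M` of) a rational subset of `H` or a
singleton `{g}` with `g ∈ M`. -/
def IsFlatProd {M : Type*} [Monoid M] (H : Submonoid M) (L : Set M) : Prop :=
  ∃ l : List (Set M),
    (∀ S ∈ l, (∃ L' : Set H, IsRat L' ∧ S = ((↑) : H → M) '' L') ∨ ∃ g : M, S = {g}) ∧
    L = prodList l

/-- Flat rational subsets of `M` relative to `H`: finite unions of flat products. -/
def IsFRat {M : Type*} [Monoid M] (H : Submonoid M) (L : Set M) : Prop :=
  ∃ (n : ℕ) (f : Fin n → Set M), (∀ i, IsFlatProd H (f i)) ∧ L = ⋃ i, f i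

/-- The smallest family of subsets of `M` containing all finite subsets, closed
under finite union and concatenation, and closed under the Kleene star of
members contained in `H`. -/
inductive Gen {M : Type*} [Monoid M] (H : Submonoid M) : Set M → Prop
  | finite (S : Set M) : S.Finite → Gen H S
  | union {S T : Set M} : Gen H S → Gen H T → Gen H (S ∪ T)
  | mul {S T : Set M} : Gen H S → Gen H T → Gen H (S * T)
  | star {S : Set M} : Gen H S → S ⊆ ↑H → Gen H (Submonoid.closure S : Set M)

/-!
Only the closure of flat rational sets under the restricted star needs work: a flat rational
set `L ⊆ H` has to be shown to come from a rational subset of `H`, after which `L*` is a single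
flat product. As `M \ G` is an ideal, `x * y ∈ H ⊆ G` forces `y ∈ G`, so `y` is a unit. A
product `L₀ g₁ L₁ ⋯ g_t L_t ⊆ H` can therefore be cut after each factor and re-glued
through units, `X * Y = (X * w) * (w⁻¹ * Y)` with `w ∈ Y`, both halves again lying in `H`.
It remains to see that `q * L * r` is rational in `H` whenever `L ∈ Rat(H)`, `q, r` are units
and `q * L * r ⊆ H`; this goes by induction on `L`, a star being handled by
`q * L* * r = (q * L * q⁻¹)* * (q * r)`.
-/

section
variable {M : Type*} [Monoid M]

/-- The paper's `Rat(H)`, read inside `M`. -/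
def IsRatIn (H : Submonoid M) (X : Set M) : Prop :=
  ∃ L' : Set H, IsRat L' ∧ X = ((↑) : H → M) '' L'

theorem Set.singleton_mul_mul_singleton_subset_iff {a b : M} {X T : Set M} :
    {a} * X * {b} ⊆ T ↔ ∀ x ∈ X, a * x * b ∈ T := by
  rw [Set.singleton_mul, Set.mul_singleton, Set.image_image, Set.image_subset_iff]
  rfl

theorem Set.mul_units_singleton_mul (X Y : Set M) (w : Mˣ) :
    X * {(w : M)} * ({((w⁻¹ : Mˣ) : M)} * Y) = X * Y := by
  rw [mul_assoc, ← mul_assoc {(w : M)}, Set.singleton_mul_singleton, Units.mul_inv,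
    Set.singleton_one, one_mul]

theorem Submonoid.units_singleton_mul_closure_mul_singleton (u : Mˣ) (X : Set M) :
    ({(u : M)} * (closure X : Set M) * {((u⁻¹ : Mˣ) : M)} : Set M) =
      closure ({(u : M)} * X * {((u⁻¹ : Mˣ) : M)}) := by
  let φ := MulDistribMulAction.toMonoidHom M (ConjAct.toConjAct u)
  have hφ (Y : Set M) : {(u : M)} * Y * {((u⁻¹ : Mˣ) : M)} = φ '' Y := by
    rw [Set.singleton_mul, Set.mul_singleton, Set.image_image]
    rfl
  rw [hφ, hφ, ← Submonoid.coe_map, MonoidHom.map_mclosure]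

end

namespace Submonoid
variable {M : Type*} [Monoid M] {H : Submonoid M}

theorem image_coe_mul (S T : Set H) : ((↑) : H → M) '' (S * T) = (↑) '' S * (↑) '' T :=
  Set.image_mul H.subtype

theorem image_coe_closure (S : Set H) :
    ((↑) : H → M) '' (closure S : Set H) = closure (((↑) : H → M) '' S) := by
  simpa only [coe_map, coe_subtype] using congrArg SetLike.coe (MonoidHom.map_mclosure H.subtype S)

variable (hH : ∀ h ∈ H, ∃ h' ∈ H, h * h' = 1 ∧ h' * h = 1)
include hH

theorem isUnit_of_mem {h : M} (hh : h ∈ H) : IsUnit h :=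
  let ⟨h', _, hr, hl⟩ := hH h hh
  isUnit_iff_exists.2 ⟨h', hr, hl⟩

theorem units_inv_mul_mem {x₀ y : M} {w : Mˣ} (h₀ : x₀ * w ∈ H) (h : x₀ * y ∈ H) :
    ↑w⁻¹ * y ∈ H := by
  obtain ⟨h', hh', -, hinv⟩ := hH _ h₀
  rw [← mul_assoc] at hinv
  rw [← Units.eq_inv_of_mul_eq_one_right hinv, mul_assoc]
  exact H.mul_mem hh' h

theorem mul_units_inv_mem {x y₀ : M} {w : Mˣ} (h₀ : w * y₀ ∈ H) (h : x * y₀ ∈ H) :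
    x * ↑w⁻¹ ∈ H := by
  obtain ⟨h', hh', hinv, -⟩ := hH _ h₀
  rw [mul_assoc] at hinv
  rw [← Units.eq_inv_of_mul_eq_one_left hinv, ← mul_assoc]
  exact H.mul_mem h hh'

theorem mul_subset_split {X Y : Set M} {x₀ : M} {w : Mˣ} (hx₀ : x₀ ∈ X) (hw : ↑w ∈ Y)
    (hXY : X * Y ⊆ H) : X * {(w : M)} ⊆ H ∧ {((w⁻¹ : Mˣ) : M)} * Y ⊆ H := by
  constructor
  · rw [Set.mul_singleton, Set.image_subset_iff]
    exact fun x hx => hXY (Set.mul_mem_mul hx hw)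
  · rw [Set.singleton_mul, Set.image_subset_iff]
    exact fun y hy => units_inv_mul_mem hH (hXY (Set.mul_mem_mul hx₀ hw))
      (hXY (Set.mul_mem_mul hx₀ hy))

end Submonoid

namespace IsRatIn
variable {M : Type*} [Monoid M] {H : Submonoid M} {X Y : Set M}

theorem of_finite (hX : X.Finite) (hXH : X ⊆ H) : IsRatIn H X :=
  ⟨(↑) ⁻¹' X, .finite _ (hX.preimage Subtype.val_injective.injOn),
    (Set.image_preimage_eq_of_subset (by rwa [Subtype.range_val])).symm⟩

theorem empty : IsRatIn H ∅ :=
  of_finite Set.finite_empty (Set.empty_subset _)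

theorem union (hX : IsRatIn H X) (hY : IsRatIn H Y) : IsRatIn H (X ∪ Y) := by
  obtain ⟨S, hS, rfl⟩ := hX
  obtain ⟨T, hT, rfl⟩ := hY
  exact ⟨S ∪ T, hS.union hT, (Set.image_union _ _ _).symm⟩

theorem mul (hX : IsRatIn H X) (hY : IsRatIn H Y) : IsRatIn H (X * Y) := by
  obtain ⟨S, hS, rfl⟩ := hX
  obtain ⟨T, hT, rfl⟩ := hY
  exact ⟨S * T, hS.mul hT, (Submonoid.image_coe_mul S T).symm⟩

theorem closure (hX : IsRatIn H X) : IsRatIn H (Submonoid.closure X) := by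
  obtain ⟨S, hS, rfl⟩ := hX
  exact ⟨_, hS.star, (Submonoid.image_coe_closure S).symm⟩

theorem gen (hX : IsRatIn H X) : Gen H X := by
  obtain ⟨S, hS, rfl⟩ := hX
  induction hS with
  | finite S hS => exact .finite _ (hS.image _)
  | union _ _ ihS ihT => rw [Set.image_union]; exact ihS.union ihT
  | mul _ _ ihS ihT => rw [Submonoid.image_coe_mul]; exact ihS.mul ihT
  | star _ ih =>
    rw [Submonoid.image_coe_closure]
    exact ih.star (Set.image_subset_iff.2 fun s _ => s.2)

end IsRatIn

section
variable {M : Type*} [Monoid M] {H : Submonoid M}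

theorem IsRat.isRatIn_units_mul_image_mul_units
    (hH : ∀ h ∈ H, ∃ h' ∈ H, h * h' = 1 ∧ h' * h = 1) {S : Set H} (hS : IsRat S)
    (q r : Mˣ) (hsub : {(q : M)} * (Subtype.val '' S) * {(r : M)} ⊆ (H : Set M)) :
    IsRatIn H ({(q : M)} * (Subtype.val '' S) * {(r : M)}) := by
  induction hS generalizing q r with
  | finite S hS =>
    exact .of_finite (((Set.finite_singleton _).mul (hS.image _)).mul (Set.finite_singleton _)) hsub
  | union _ _ ihS ihT =>
    rw [Set.image_union, Set.mul_union, Set.union_mul, Set.union_subset_iff] at *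
    exact (ihS q r hsub.1).union (ihT q r hsub.2)
  | @mul S T _ _ ihS ihT =>
    rcases S.eq_empty_or_nonempty with rfl | ⟨s₀, hs₀⟩
    · simpa using IsRatIn.empty
    rcases T.eq_empty_or_nonempty with rfl | ⟨t₀, ht₀⟩
    · simpa using IsRatIn.empty
    let w := (Submonoid.isUnit_of_mem hH t₀.2).unit * r
    rw [Submonoid.image_coe_mul, ← mul_assoc, mul_assoc _ _ {(r : M)}] at hsub ⊢
    have hw : (w : M) ∈ Subtype.val '' T * {(r : M)} :=
      Set.mul_mem_mul (Set.mem_image_of_mem _ ht₀) (Set.mem_singleton _)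
    obtain ⟨hSw, hwT⟩ := Submonoid.mul_subset_split hH
      (Set.mul_mem_mul (Set.mem_singleton (q : M)) (Set.mem_image_of_mem _ hs₀)) hw hsub
    rw [← mul_assoc] at hwT
    convert (ihS q w hSw).mul (ihT w⁻¹ r hwT) using 1
    rw [mul_assoc ({((w⁻¹ : Mˣ) : M)} : Set M), Set.mul_units_singleton_mul]
  | @star S _ ih =>
    rw [Submonoid.image_coe_closure] at hsub ⊢
    rw [Set.singleton_mul_mul_singleton_subset_iff] at hsub
    have hqr : (q * r : M) ∈ H := by simpa using hsub 1 (Submonoid.one_mem _)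
    have hconj : {(q : M)} * (Subtype.val '' S) * {((q⁻¹ : Mˣ) : M)} ⊆ (H : Set M) :=
      Set.singleton_mul_mul_singleton_subset_iff.2 fun s hs => Submonoid.mul_units_inv_mem hH hqr
        (by simpa [mul_assoc] using hsub s (Submonoid.subset_closure hs))
    have key : {(q : M)} * (Submonoid.closure (Subtype.val '' S) : Set M) * {(r : M)} =
        (Submonoid.closure ({(q : M)} * (Subtype.val '' S) * {((q⁻¹ : Mˣ) : M)} : Set M) :
          Set M) * {(q * r : M)} := by
      rw [← Submonoid.units_singleton_mul_closure_mul_singleton,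
        mul_assoc _ ({((q⁻¹ : Mˣ) : M)} : Set M),
        Set.singleton_mul_singleton, Units.inv_mul_cancel_left]
    rw [key]
    exact (ih q q⁻¹ hconj).closure.mul (.of_finite (Set.finite_singleton _) (by simpa using hqr))

end

section
variable {M : Type*} [Monoid M] {H : Submonoid M}

theorem prodList_append (l₁ l₂ : List (Set M)) :
    prodList (l₁ ++ l₂) = prodList l₁ * prodList l₂ := by
  induction l₁ with
  | nil => exact (one_mul _).symm
  | cons S l ih => rw [List.cons_append, prodList, prodList, ih, mul_assoc]

theorem isRatIn_units_mul_prodList (hH : ∀ h ∈ H, ∃ h' ∈ H, h * h' = 1 ∧ h' * h = 1)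
    (hunit : ∀ x y : M, x * y ∈ H → IsUnit y) {l : List (Set M)}
    (hl : ∀ S ∈ l, IsRatIn H S ∨ ∃ g : M, S = {g}) (q : Mˣ)
    (hsub : {(q : M)} * prodList l ⊆ (H : Set M)) : IsRatIn H ({(q : M)} * prodList l) := by
  induction l generalizing q with
  | nil => exact .of_finite ((Set.finite_singleton _).mul (Set.finite_singleton _)) hsub
  | cons S l ih =>
    rw [List.forall_mem_cons] at hl
    rw [prodList, ← mul_assoc] at hsub ⊢
    rcases ({(q : M)} * S * prodList l).eq_empty_or_nonempty with
      he | ⟨_, x₀, hx₀, t₀, ht₀, rfl⟩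
    · rw [he]; exact .empty
    let w := (hunit _ _ (hsub ⟨x₀, hx₀, t₀, ht₀, rfl⟩)).unit
    obtain ⟨hSw, hwl⟩ := Submonoid.mul_subset_split hH hx₀ (w := w) ht₀ hsub
    rw [← Set.mul_units_singleton_mul _ _ w]
    refine .mul ?_ (ih hl.2 _ hwl)
    rcases hl.1 with ⟨S, hS, rfl⟩ | ⟨g, rfl⟩
    · exact hS.isRatIn_units_mul_image_mul_units hH q w hSw
    · exact .of_finite (((Set.finite_singleton _).mul (Set.finite_singleton _)).mul
        (Set.finite_singleton _)) hSw

namespace IsFlatProd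

theorem singleton (a : M) : IsFlatProd H {a} :=
  ⟨[{a}], List.forall_mem_singleton.2 (Or.inr ⟨a, rfl⟩), (mul_one _).symm⟩

theorem of_isRatIn {X : Set M} (hX : IsRatIn H X) : IsFlatProd H X :=
  ⟨[X], List.forall_mem_singleton.2 (Or.inl hX), (mul_one _).symm⟩

theorem mul {P Q : Set M} (hP : IsFlatProd H P) (hQ : IsFlatProd H Q) : IsFlatProd H (P * Q) := by
  obtain ⟨l₁, hl₁, rfl⟩ := hP
  obtain ⟨l₂, hl₂, rfl⟩ := hQ
  exact ⟨l₁ ++ l₂, List.forall_mem_append.2 ⟨hl₁, hl₂⟩,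
    (prodList_append l₁ l₂).symm⟩

theorem gen {P : Set M} (hP : IsFlatProd H P) : Gen H P := by
  obtain ⟨l, hl, rfl⟩ := hP
  induction l with
  | nil => exact .finite _ (Set.finite_singleton _)
  | cons S l ih =>
    rw [List.forall_mem_cons] at hl
    refine .mul ?_ (ih hl.2)
    rcases hl.1 with hS | ⟨g, rfl⟩
    exacts [IsRatIn.gen hS, .finite _ (Set.finite_singleton _)]

theorem isRatIn (hH : ∀ h ∈ H, ∃ h' ∈ H, h * h' = 1 ∧ h' * h = 1)
    (hunit : ∀ x y : M, x * y ∈ H → IsUnit y) {P : Set M} (hP : IsFlatProd H P)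
    (hPH : P ⊆ H) : IsRatIn H P := by
  obtain ⟨l, hl, rfl⟩ := hP
  simpa using isRatIn_units_mul_prodList hH hunit hl 1 (by simpa using hPH)

theorem isFRat {P : Set M} (hP : IsFlatProd H P) : IsFRat H P :=
  ⟨1, fun _ => P, fun _ => hP, (Set.iUnion_const P).symm⟩

end IsFlatProd

theorem isFRat_iff_exists_sUnion {L : Set M} :
    IsFRat H L ↔
      ∃ s : Set (Set M), s.Finite ∧ (∀ P ∈ s, IsFlatProd H P) ∧ L = ⋃₀ s := by
  constructor
  · rintro ⟨n, f, hf, rfl⟩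
    exact ⟨Set.range f, Set.finite_range f, Set.forall_mem_range.2 hf,
      (Set.sUnion_range f).symm⟩
  · rintro ⟨s, hs, hP, rfl⟩
    obtain ⟨n, f, hfs⟩ := hs.fin_embedding
    exact ⟨n, f, fun i => hP _ (hfs ▸ Set.mem_range_self i),
      by rw [← hfs, Set.sUnion_range]⟩

theorem isFRat_of_finite {S : Set M} (hS : S.Finite) : IsFRat H S :=
  isFRat_iff_exists_sUnion.2 ⟨_, hS.image _, Set.forall_mem_image.2 fun a _ => .singleton a,
    by rw [Set.sUnion_image, Set.biUnion_of_singleton]⟩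

namespace IsFRat

theorem union {P Q : Set M} (hP : IsFRat H P) (hQ : IsFRat H Q) : IsFRat H (P ∪ Q) := by
  obtain ⟨s, hs, hsP, rfl⟩ := isFRat_iff_exists_sUnion.1 hP
  obtain ⟨t, ht, htP, rfl⟩ := isFRat_iff_exists_sUnion.1 hQ
  exact isFRat_iff_exists_sUnion.2 ⟨s ∪ t, hs.union ht, fun P hP => hP.elim (hsP P) (htP P),
    (Set.sUnion_union s t).symm⟩

theorem mul {P Q : Set M} (hP : IsFRat H P) (hQ : IsFRat H Q) : IsFRat H (P * Q) := by
  obtain ⟨s, hs, hsP, rfl⟩ := isFRat_iff_exists_sUnion.1 hP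
  obtain ⟨t, ht, htP, rfl⟩ := isFRat_iff_exists_sUnion.1 hQ
  refine isFRat_iff_exists_sUnion.2 ⟨Set.image2 (· * ·) s t, hs.image2 _ ht,
    Set.forall_mem_image2.2 fun P hP Q hQ => (hsP P hP).mul (htP Q hQ), ?_⟩
  rw [Set.sUnion_image2, Set.sUnion_mul]
  simp_rw [Set.mul_sUnion]

theorem gen {L : Set M} (hL : IsFRat H L) : Gen H L := by
  obtain ⟨n, f, hf, rfl⟩ := hL
  exact SupClosed.iSup_mem (s := {X | Gen H X}) (fun _ hX _ hY => Gen.union hX hY)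
    (Gen.finite _ Set.finite_empty) fun i => (hf i).gen

theorem isRatIn (hH : ∀ h ∈ H, ∃ h' ∈ H, h * h' = 1 ∧ h' * h = 1)
    (hunit : ∀ x y : M, x * y ∈ H → IsUnit y) {L : Set M} (hL : IsFRat H L) (hLH : L ⊆ H) :
    IsRatIn H L := by
  obtain ⟨n, f, hf, rfl⟩ := hL
  exact SupClosed.iSup_mem (s := {X | IsRatIn H X}) (fun _ hX _ hY => IsRatIn.union hX hY)
    IsRatIn.empty fun i => (hf i).isRatIn hH hunit ((Set.subset_iUnion f i).trans hLH)

end IsFRat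

end

/-- Let `H ≤ G` be submonoids of `M` such that `G` and `H` are groups and
`M \ G` is an ideal (possibly empty). Then the flat rational subsets of `M`
relative to `H` form exactly the smallest family of subsets of `M` containing
all finite subsets, closed under finite union and concatenation, and closed
under Kleene star of members contained in `H`. -/
theorem stmt16 (M : Type*) [Monoid M] (G H : Submonoid M) (hHG : H ≤ G)
    (hGgrp : ∀ g ∈ G, ∃ g' ∈ G, g * g' = 1 ∧ g' * g = 1)
    (hHgrp : ∀ h ∈ H, ∃ h' ∈ H, h * h' = 1 ∧ h' * h = 1)
    (hideal : ∀ m : M, m ∉ G → ∀ x y : M, x * m * y ∉ G) :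
    ∀ L : Set M, IsFRat H L ↔ Gen H L := by
  have hunit (x y : M) (hxy : x * y ∈ H) : IsUnit y := by
    have hyG : y ∈ G := by_contra fun hy => hideal y hy x 1 (by simpa using hHG hxy)
    exact Submonoid.isUnit_of_mem hGgrp hyG
  refine fun L => ⟨IsFRat.gen, fun hL => ?_⟩
  induction hL with
  | finite S hS => exact isFRat_of_finite hS
  | union _ _ hS hT => exact hS.union hT
  | mul _ _ hS hT => exact hS.mul hT
  | star _ hSH hS => exact (IsFlatProd.of_isRatIn (hS.isRatIn hHgrp hunit hSH).closure).isFRat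
end

section
/- For every a ∈ ℤ and every pair of indices (i,j), the set M_ij(a) of matrices in GL(2,ℤ) whose (i,j)-entry equals a is a rational subset of GL(2,ℤ). -/
open Pointwise
/-! The `(0,0)` entry is unchanged by multiplying on the left by a lower and on the right by an
upper unitriangular matrix, i.e. by elements of the cyclic groups generated by `!![1,0;1,1]` and
`!![1,1;0,1]`. Every such double coset of a matrix with `(0,0)` entry `a` contains a matrix with
bounded entries: for `a ≠ 0` reduce the off-diagonal entries modulo `a`, after which the
determinant `±1` bounds the `(1,1)` entry; for `a = 0` the off-diagonal entries are `±1` and the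
`(1,1)` entry can be cleared. Hence `M₀₀(a) = L * F * U` with `F` finite, and the other entries
are reduced to `(0,0)` by multiplying with permutation matrices. -/

open Matrix SpecialLinearGroup Equiv

namespace IsRat

lemma zpowers {G : Type*} [Group G] (g : G) : IsRat (Subgroup.zpowers g : Set G) := by
  rw [Subgroup.zpowers_eq_closure, ← Subgroup.coe_toSubmonoid, Subgroup.closure_toSubmonoid]
  exact .star (.finite _ ((Set.finite_singleton g).union (Set.finite_singleton g).inv))

lemma preimage_mul_mul {G : Type*} [Group G] {S : Set G} (hS : IsRat S) (p q : G) :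
    IsRat ((fun x ↦ p * x * q) ⁻¹' S) := by
  have h : (fun x ↦ p * x * q) ⁻¹' S = {p⁻¹} * S * {q⁻¹} := by
    rw [Set.singleton_mul, Set.mul_singleton, Set.image_image,
      ← Set.image_eq_preimage_of_inverse] <;> intro x <;> group
  rw [h]
  exact .mul (.mul (.finite _ (Set.finite_singleton _)) hS) (.finite _ (Set.finite_singleton _))

end IsRat

lemma Matrix.SpecialLinearGroup.transvection_zpow {ι F : Type*} [DecidableEq ι] [Fintype ι]
    [CommRing F] {i j : ι} (hij : i ≠ j) (b : F) (n : ℤ) :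
    transvection hij b ^ n = transvection hij (n • b) := by
  induction n using Int.induction_on with
  | zero => simp
  | succ n ih => rw [_root_.zpow_add_one, ih, ← transvection_add, add_smul, one_smul]
  | pred n ih =>
    rw [_root_.zpow_sub_one, ih, transvection_inv, ← transvection_add, sub_smul, one_smul,
      sub_eq_add_neg]

lemma Matrix.GeneralLinearGroup.abs_det_eq_one {n : Type*} [Fintype n] [DecidableEq n]
    (g : GL n ℤ) : |(g : Matrix n n ℤ).det| = 1 :=
  Int.isUnit_iff_abs_eq.mp (isUnits_det_units g)

lemma Matrix.GeneralLinearGroup.finite_setOf_abs_apply_le {n : Type*} [Fintype n] [DecidableEq n]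
    (B : ℤ) : {g : GL n ℤ | ∀ i j, |g i j| ≤ B}.Finite := by
  refine Set.Finite.of_finite_image ?_ Units.val_injective.injOn
  refine (Set.Finite.pi fun _ ↦ Set.Finite.pi fun _ ↦ Set.finite_Icc (-B) B).subset ?_
  rintro _ ⟨g, hg, rfl⟩ i - j -
  exact abs_le.mp (hg i j)

/-- The permutation matrix of `σ⁻¹`, as a unit. -/
def permGL {n : Type*} [Fintype n] [DecidableEq n] (R : Type*) [CommRing R] :
    Perm n →* GL n R :=
  permMatrixHom.toHomUnits

lemma permGL_mul_mul_permGL_apply {n : Type*} [Fintype n] [DecidableEq n] {R : Type*}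
    [CommRing R] (σ τ : Perm n) (g : GL n R) (k l : n) :
    (permGL R σ * g * permGL R τ) k l = g (σ⁻¹ k) (τ l) := by
  simp [permGL, PEquiv.toMatrix_toPEquiv_mul, PEquiv.mul_toMatrix_toPEquiv, Perm.inv_def]

def lowerTransvection (m : ℤ) : GL (Fin 2) ℤ := toGL (transvection (i := 1) (j := 0) (by decide) m)

def upperTransvection (n : ℤ) : GL (Fin 2) ℤ := toGL (transvection (i := 0) (j := 1) (by decide) n)

lemma lowerTransvection_one_zpow (m : ℤ) : lowerTransvection 1 ^ m = lowerTransvection m := by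
  rw [lowerTransvection, ← map_zpow, transvection_zpow, smul_eq_mul, mul_one, lowerTransvection]

lemma upperTransvection_one_zpow (n : ℤ) : upperTransvection 1 ^ n = upperTransvection n := by
  rw [upperTransvection, ← map_zpow, transvection_zpow, smul_eq_mul, mul_one, upperTransvection]

lemma coe_zpowers_lowerTransvection_one :
    (Subgroup.zpowers (lowerTransvection 1) : Set (GL (Fin 2) ℤ)) =
      Set.range lowerTransvection := by
  ext; simp [Subgroup.mem_zpowers_iff, lowerTransvection_one_zpow]

lemma coe_zpowers_upperTransvection_one :
    (Subgroup.zpowers (upperTransvection 1) : Set (GL (Fin 2) ℤ)) =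
      Set.range upperTransvection := by
  ext; simp [Subgroup.mem_zpowers_iff, upperTransvection_one_zpow]

lemma coe_lowerTransvection_mul_mul_upperTransvection (m n : ℤ) (g : GL (Fin 2) ℤ) :
    ((lowerTransvection m * g * upperTransvection n : GL (Fin 2) ℤ) : Matrix (Fin 2) (Fin 2) ℤ) =
      !![g 0 0, g 0 1 + g 0 0 * n;
        g 1 0 + m * g 0 0, g 1 1 + m * g 0 1 + (g 1 0 + m * g 0 0) * n] := by
  ext k l
  fin_cases k <;> fin_cases l <;>
    simp [lowerTransvection, upperTransvection, transvection_coe, mul_apply, Fin.sum_univ_two,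
      single_apply] <;> ring

lemma abs_apply_one_one_le (h : GL (Fin 2) ℤ) (h00 : h 0 0 ≠ 0) (h01 : |h 0 1| < |h 0 0|)
    (h10 : |h 1 0| < |h 0 0|) : |h 1 1| ≤ |h 0 0| := by
  have hdet := GeneralLinearGroup.abs_det_eq_one h
  rw [det_fin_two] at hdet
  have hpos : 0 < |h 0 0| := abs_pos.mpr h00
  have hprod : |h 0 0| * |h 1 1| ≤ 1 + (|h 0 0| - 1) ^ 2 :=
    calc |h 0 0| * |h 1 1| = |(h 0 0 * h 1 1 - h 0 1 * h 1 0) + h 0 1 * h 1 0| := by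
          rw [sub_add_cancel, abs_mul]
      _ ≤ 1 + |h 0 1| * |h 1 0| := by rw [← hdet, ← abs_mul]; exact abs_add_le _ _
      _ ≤ 1 + (|h 0 0| - 1) ^ 2 := by nlinarith [abs_nonneg (h 0 1), abs_nonneg (h 1 0)]
  nlinarith

lemma exists_abs_apply_lowerTransvection_mul_mul_upperTransvection_le (g : GL (Fin 2) ℤ) :
    ∃ m n : ℤ, ∀ k l, |(lowerTransvection m * g * upperTransvection n) k l| ≤ |g 0 0| + 1 := by
  by_cases h00 : g 0 0 = 0
  · have hdet := GeneralLinearGroup.abs_det_eq_one g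
    rw [det_fin_two, h00, zero_mul, zero_sub, abs_neg, abs_mul] at hdet
    have h01 : |g 0 1| = 1 := Int.eq_one_of_mul_eq_one_right (abs_nonneg _) hdet
    have h10 : |g 1 0| = 1 := Int.eq_one_of_mul_eq_one_left (abs_nonneg _) hdet
    have h10sq : g 1 0 * g 1 0 = 1 := by rw [← abs_mul_abs_self, h10, one_mul]
    refine ⟨0, -(g 1 1 * g 1 0), fun k l ↦ ?_⟩
    rw [coe_lowerTransvection_mul_mul_upperTransvection]
    have h11 : g 1 1 + -(g 1 0 * (g 1 1 * g 1 0)) = 0 := by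
      linear_combination (-g 1 1) * h10sq
    fin_cases k <;> fin_cases l <;> simp [h00, h01, h10, h11]
  · set a := g 0 0
    refine ⟨-(g 1 0 / a), -(g 0 1 / a), fun k l ↦ ?_⟩
    set h := lowerTransvection (-(g 1 0 / a)) * g * upperTransvection (-(g 0 1 / a))
    have hcoe := coe_lowerTransvection_mul_mul_upperTransvection (-(g 1 0 / a)) (-(g 0 1 / a)) g
    have e00 : h 0 0 = a := by rw [hcoe]; rfl
    have e01 : h 0 1 = g 0 1 % a :=
      calc h 0 1 = g 0 1 + a * -(g 0 1 / a) := by rw [hcoe]; rfl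
        _ = g 0 1 % a := by rw [Int.emod_def]; ring
    have e10 : h 1 0 = g 1 0 % a :=
      calc h 1 0 = g 1 0 + -(g 1 0 / a) * a := by rw [hcoe]; rfl
        _ = g 1 0 % a := by rw [Int.emod_def]; ring
    have habs01 : |h 0 1| < |a| := by
      rw [e01, abs_of_nonneg (Int.emod_nonneg _ h00)]; exact Int.emod_lt_abs _ h00
    have habs10 : |h 1 0| < |a| := by
      rw [e10, abs_of_nonneg (Int.emod_nonneg _ h00)]; exact Int.emod_lt_abs _ h00
    have habs11 := abs_apply_one_one_le h (e00 ▸ h00) (e00 ▸ habs01) (e00 ▸ habs10)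
    rw [e00] at habs11
    fin_cases k <;> fin_cases l
    · simp [e00]
    · exact (habs01.trans (lt_add_one _)).le
    · exact (habs10.trans (lt_add_one _)).le
    · exact habs11.trans (le_add_of_nonneg_right zero_le_one)

lemma setOf_apply_zero_zero_eq (a : ℤ) :
    {g : GL (Fin 2) ℤ | g 0 0 = a} =
      Set.range lowerTransvection * {g | g 0 0 = a ∧ ∀ k l, |g k l| ≤ |a| + 1} *
        Set.range upperTransvection := by
  ext g
  constructor
  · rintro (hg : g 0 0 = a)
    obtain ⟨m, n, hmn⟩ := exists_abs_apply_lowerTransvection_mul_mul_upperTransvection_le g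
    have h00 : (lowerTransvection m * g * upperTransvection n) 0 0 = a := by
      rw [coe_lowerTransvection_mul_mul_upperTransvection, ← hg]; rfl
    refine ⟨_, ⟨_, ⟨-m, rfl⟩, _, ⟨h00, hg ▸ hmn⟩, rfl⟩, _, ⟨-n, rfl⟩, ?_⟩
    rw [← lowerTransvection_one_zpow m, ← lowerTransvection_one_zpow (-m),
      ← upperTransvection_one_zpow n, ← upperTransvection_one_zpow (-n)]
    group
  · rintro ⟨_, ⟨_, ⟨m, rfl⟩, f, ⟨hf, -⟩, rfl⟩, _, ⟨n, rfl⟩, rfl⟩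
    show (lowerTransvection m * f * upperTransvection n) 0 0 = a
    rw [coe_lowerTransvection_mul_mul_upperTransvection, ← hf]; rfl

lemma isRat_setOf_apply_zero_zero (a : ℤ) : IsRat {g : GL (Fin 2) ℤ | g 0 0 = a} := by
  rw [setOf_apply_zero_zero_eq, ← coe_zpowers_lowerTransvection_one,
    ← coe_zpowers_upperTransvection_one]
  exact .mul (.mul (.zpowers _) (.finite _
    ((GeneralLinearGroup.finite_setOf_abs_apply_le (|a| + 1)).subset fun _ hg ↦ hg.2)))
    (.zpowers _)

/-- For every `a ∈ ℤ` and indices `i, j`, the set of matrices in `GL(2,ℤ)`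
whose `(i,j)` entry equals `a` is a rational subset of `GL(2,ℤ)`. -/
theorem stmt17 (a : ℤ) (i j : Fin 2) :
    IsRat {g : GL (Fin 2) ℤ | (g : Matrix (Fin 2) (Fin 2) ℤ) i j = a} := by
  have h : {g : GL (Fin 2) ℤ | g i j = a} =
      (fun x ↦ permGL ℤ (swap 0 i) * x * permGL ℤ (swap 0 j)) ⁻¹' {g | g 0 0 = a} := by
    ext g
    show g i j = a ↔ (permGL ℤ (swap 0 i) * g * permGL ℤ (swap 0 j)) 0 0 = a
    rw [permGL_mul_mul_permGL_apply, swap_inv, swap_apply_left, swap_apply_left]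
  rw [h]
  exact (isRat_setOf_apply_zero_zero a).preimage_mul_mul _ _
end
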